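/- arXiv:1802.01739 — 13 statements merged into one kernel-verified Lean document; each statement's English description precedes it below -/
import Mathlib

section
/- Let q be an odd prime power, n=(q+1)/2, and f(y) = (1+√y)^n + (1-√y)^n ∈ F_q[y] (a polynomial since odd powers of √y cancel). Then f(y)^2 = 2y^n + 2(1-y)^n + 2 in F_q[y]. -/
open Polynomial

lemma compX2_injective (F : Type*) [Field F] :
    Function.Injective (fun p : F[X] => p.comp (X ^ 2)) := by
  intro p q h
  simp only at h
  by_contra hne
  have hr : (p - q).comp (X ^ 2) = 0 := by rw [sub_comp, h, sub_self]
  have hr0 : p - q ≠ 0 := sub_ne_zero.mpr hne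
  have hlc : (p - q).leadingCoeff * (X ^ 2 : F[X]).leadingCoeff ^ (p - q).natDegree ≠ 0 := by
    simp [leadingCoeff_eq_zero, hr0, monic_X_pow (R := F) 2]
  have := leadingCoeff_comp (p := p - q) (q := (X ^ 2 : F[X])) (by simp [natDegree_X_pow])
  rw [hr, leadingCoeff_zero] at this
  exact hlc this.symm

theorem stmt0 (F : Type*) [Field F] [Fintype F] (hodd : Odd (Fintype.card F))
    (n : ℕ) (hn : n = (Fintype.card F + 1) / 2)
    (f : F[X]) (hf : f.comp (X ^ 2) = (1 + X) ^ n + (1 - X) ^ n) :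
    f ^ 2 = 2 * X ^ n + 2 * (1 - X) ^ n + 2 := by
  set p := ringChar F with hpdef
  obtain ⟨k, hp, hcard⟩ := FiniteField.card F p
  haveI : Fact p.Prime := ⟨hp⟩
  haveI : CharP F[X] p := Polynomial.instCharP p
  have h2n : 2 * n = Fintype.card F + 1 := by
    obtain ⟨m, hm⟩ := hodd
    omega
  have key : (f ^ 2).comp (X ^ 2) =
      (2 * X ^ n + 2 * (1 - X) ^ n + 2 : F[X]).comp (X ^ 2) := by
    rw [pow_comp, hf]
    have expand : ((1 + X) ^ n + (1 - X) ^ n : F[X]) ^ 2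
        = (1 + X) ^ (2 * n) + (1 - X) ^ (2 * n) + 2 * ((1 + X) ^ n * (1 - X) ^ n) := by
      ring
    have hmul : ((1 : F[X]) + X) ^ n * (1 - X) ^ n = (1 - X ^ 2) ^ n := by
      rw [← mul_pow]; ring_nf
    rw [expand, hmul, h2n]
    have hXq : ∀ a : F[X], a ^ Fintype.card F = a ^ p ^ (k : ℕ) := by
      intro a; rw [hcard]
    have h1 : ((1 : F[X]) + X) ^ (Fintype.card F + 1) = (1 + X ^ Fintype.card F) * (1 + X) := by
      rw [pow_succ, hXq, add_pow_char_pow, one_pow, ← hXq]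
    have h2 : ((1 : F[X]) - X) ^ (Fintype.card F + 1) = (1 - X ^ Fintype.card F) * (1 - X) := by
      rw [pow_succ, hXq, sub_pow_char_pow, one_pow, ← hXq]
    rw [h1, h2]
    have hX2n : ((X : F[X]) ^ 2) ^ n = X ^ (Fintype.card F + 1) := by
      rw [← pow_mul, h2n]
    simp only [add_comp, mul_comp, pow_comp, one_comp, X_comp, sub_comp, ofNat_comp]
    rw [hX2n, pow_succ]
    ring
  exact compX2_injective F key
end

section
/- Let q be an odd prime power, n=(q+1)/2, s ∈ F_q with s ∉ {1,-1}, and g_s(y) = y^n + (1-y)^n - s ∈ F_q[y]. Then g_s has no repeated roots (all its roots in an algebraic closure are distinct). -/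
open Polynomial

theorem stmt1 (F : Type*) [Field F] [Fintype F] (hodd : Odd (Fintype.card F))
    (n : ℕ) (hn : n = (Fintype.card F + 1) / 2)
    (s : F) (hs1 : s ≠ 1) (hs2 : s ≠ -1) :
    (X ^ n + (1 - X) ^ n - C s : F[X]).Separable := by
  classical
  set q := Fintype.card F with hq
  set p := ringChar F with hpdef
  haveI : CharP F p := ringChar.charP F
  obtain ⟨k, hp, hcard⟩ := FiniteField.card F p
  have h2n : 2 * n = q + 1 := by
    obtain ⟨m, hm⟩ := hodd
    omega
  have hq2 : 2 ≤ q := Fintype.one_lt_card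
  have hn1 : 1 ≤ n := by omega
  set K := AlgebraicClosure F with hK
  haveI : CharP K p := charP_of_injective_algebraMap (algebraMap F K).injective p
  have hinj : Function.Injective (algebraMap F K) := (algebraMap F K).injective
  rw [Polynomial.Separable,
    Polynomial.isCoprime_iff_aeval_ne_zero_of_isAlgClosed (k := F) (AlgebraicClosure F)]
  intro a
  by_contra hcon
  push_neg at hcon
  obtain ⟨h1, h2⟩ := hcon
  set s' : K := algebraMap F K s with hs'
  -- evaluate the polynomial
  have e1 : a ^ n + (1 - a) ^ n = s' := by
    have := h1
    simp only [map_sub, map_add, map_pow, map_one, aeval_X, aeval_C] at this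
    linear_combination this
  -- evaluate the derivative
  have e2 : (n : K) * a ^ (n - 1) = (n : K) * (1 - a) ^ (n - 1) := by
    have hd : derivative (X ^ n + (1 - X) ^ n - C s : F[X]) =
        C (n : F) * X ^ (n - 1) - C (n : F) * (1 - X) ^ (n - 1) := by
      simp [derivative_pow, mul_comm, mul_assoc, mul_left_comm]
      ring
    rw [hd] at h2
    simp only [map_sub, map_mul, map_pow, map_one, aeval_X, aeval_C,
      map_natCast] at h2
    linear_combination h2
  have hncast : (n : K) ≠ 0 := by
    intro h0
    have : ((2 * n : ℕ) : K) = 1 := by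
      rw [h2n]
      push_cast
      rw [show ((q : ℕ) : K) = algebraMap F K (q : F) by push_cast; simp]
      rw [FiniteField.cast_card_eq_zero]
      simp
    rw [Nat.cast_mul, h0, mul_zero] at this
    exact one_ne_zero this.symm
  have e3 : a ^ (n - 1) = (1 - a) ^ (n - 1) := mul_left_cancel₀ hncast e2
  -- deduce s' = a^(n-1)
  have e4 : a ^ (n - 1) = s' := by
    have ha : a ^ n = a * a ^ (n - 1) := by
      conv_lhs => rw [show n = 1 + (n - 1) by omega]
      rw [pow_add, pow_one]
    have hb : (1 - a) ^ n = (1 - a) * a ^ (n - 1) := by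
      conv_lhs => rw [show n = 1 + (n - 1) by omega]
      rw [pow_add, pow_one, e3]
    rw [ha, hb] at e1
    linear_combination e1
  -- Frobenius computations
  have eq1 : a ^ q = a * s' ^ 2 := by
    have : a ^ q = a * (a ^ (n - 1)) ^ 2 := by
      rw [← pow_mul, ← pow_succ']
      congr 1
      omega
    rw [this, e4]
  have eq2 : (1 - a) ^ q = (1 - a) * s' ^ 2 := by
    have : (1 - a) ^ q = (1 - a) * ((1 - a) ^ (n - 1)) ^ 2 := by
      rw [← pow_mul, ← pow_succ']
      congr 1
      omega
    rw [this, ← e3, e4]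
  haveI : Fact (Nat.Prime p) := ⟨hp⟩
  have frob : (1 - a) ^ q = 1 - a ^ q := by
    rw [hq, hcard, sub_pow_char_pow, one_pow]
  have hs2' : s' ^ 2 = 1 := by
    rw [eq2, eq1] at frob
    linear_combination frob
  have hz : (s' - 1) * (s' + 1) = 0 := by linear_combination hs2'
  rcases mul_eq_zero.mp hz with h | h
  · refine hs1 (hinj ?_)
    rw [map_one]
    exact sub_eq_zero.mp h
  · refine hs2 (hinj ?_)
    rw [map_neg, map_one]
    exact eq_neg_of_add_eq_zero_left h
end

section
/- Let q be an odd prime power, n=(q+1)/2, and s ∈ F_q with s ∉ {0,1,-1}. Then the polynomial g_s(y) = y^n + (1-y)^n - s has a root in F_q if and only if (1+s)/2 is a nonzero square in F_q and (1-s)/2 is a non-square in F_q. -/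
open Polynomial

private lemma pow_key_sq {F : Type*} [Field F] [Fintype F] (hchar : ringChar F ≠ 2)
    {n : ℕ} (hn : n = (Fintype.card F + 1) / 2) {a : F} (ha : a ≠ 0)
    (hsq : IsSquare a) : a ^ n = a := by
  have hq := FiniteField.odd_card_of_char_ne_two hchar
  have hn' : n = Fintype.card F / 2 + 1 := by omega
  rw [hn', pow_succ, (FiniteField.isSquare_iff hchar ha).mp hsq, one_mul]

private lemma pow_key_ns {F : Type*} [Field F] [Fintype F] (hchar : ringChar F ≠ 2)
    {n : ℕ} (hn : n = (Fintype.card F + 1) / 2) {a : F} (ha : a ≠ 0)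
    (hsq : ¬ IsSquare a) : a ^ n = -a := by
  have hq := FiniteField.odd_card_of_char_ne_two hchar
  have hn' : n = Fintype.card F / 2 + 1 := by omega
  rw [hn', pow_succ]
  rcases FiniteField.pow_dichotomy hchar ha with h | h
  · exact absurd ((FiniteField.isSquare_iff hchar ha).mpr h) hsq
  · rw [h]; ring

theorem stmt2 (F : Type*) [Field F] [Fintype F] (hodd : Odd (Fintype.card F))
    (n : ℕ) (hn : n = (Fintype.card F + 1) / 2)
    (s : F) (hs0 : s ≠ 0) (hs1 : s ≠ 1) (hs2 : s ≠ -1) :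
    (∃ x : F, x ^ n + (1 - x) ^ n = s) ↔
      (IsSquare ((1 + s) / 2) ∧ (1 + s) / 2 ≠ 0 ∧ ¬ IsSquare ((1 - s) / 2)) := by
  have hq : Fintype.card F % 2 = 1 := Nat.odd_iff.mp hodd
  have hchar : ringChar F ≠ 2 := by
    intro h
    have := FiniteField.even_card_of_char_two (F := F) h
    omega
  have h2 : (2 : F) ≠ 0 := Ring.two_ne_zero hchar
  have hcard : 1 ≤ Fintype.card F := Fintype.card_pos
  have hnpos : n ≠ 0 := by omega
  have hps : (1 + s) / 2 ≠ 0 := by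
    intro h
    apply hs2
    field_simp at h
    linear_combination h
  have hms : (1 - s) / 2 ≠ 0 := by
    intro h
    apply hs1
    field_simp at h
    linear_combination -h
  constructor
  · rintro ⟨x, hx⟩
    by_cases hx0 : x = 0
    · subst hx0; simp [zero_pow hnpos] at hx; exact absurd hx.symm hs1
    by_cases hx1 : (1 : F) - x = 0
    · have : x = 1 := by linear_combination -hx1
      subst this
      simp [zero_pow hnpos] at hx
      exact absurd hx.symm hs1
    by_cases hA : IsSquare x <;> by_cases hB : IsSquare (1 - x)
    · rw [pow_key_sq hchar hn hx0 hA, pow_key_sq hchar hn hx1 hB] at hx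
      exact absurd (by linear_combination -hx) hs1
    · rw [pow_key_sq hchar hn hx0 hA, pow_key_ns hchar hn hx1 hB] at hx
      have e1 : (1 + s) / 2 = x := by field_simp; linear_combination -hx
      have e2 : (1 - s) / 2 = 1 - x := by field_simp; linear_combination hx
      rw [e1, e2]
      exact ⟨hA, e1 ▸ hps, hB⟩
    · rw [pow_key_ns hchar hn hx0 hA, pow_key_sq hchar hn hx1 hB] at hx
      have e1 : (1 + s) / 2 = 1 - x := by field_simp; linear_combination -hx
      have e2 : (1 - s) / 2 = x := by field_simp; linear_combination hx
      rw [e1, e2]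
      exact ⟨hB, e1 ▸ hps, hA⟩
    · rw [pow_key_ns hchar hn hx0 hA, pow_key_ns hchar hn hx1 hB] at hx
      exact absurd (by linear_combination -hx) hs2
  · rintro ⟨hsq, hne, hnsq⟩
    refine ⟨(1 + s) / 2, ?_⟩
    have h1x : 1 - (1 + s) / 2 = (1 - s) / 2 := by field_simp; ring
    rw [pow_key_sq hchar hn hne hsq, h1x, pow_key_ns hchar hn hms hnsq]
    field_simp
    ring
end

section
/- Let q be an odd prime power, n=(q+1)/2, and s ∈ F_q with s ∉ {0,1,-1} satisfying ρ((1+s)/2)=1 and ρ((1-s)/2)=-1. Then the only roots of g_s(y)=y^n+(1-y)^n - s in F_q are (1+s)/2 and (1-s)/2. -/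
open Polynomial

theorem stmt3 (F : Type*) [Field F] [Fintype F] (hodd : Odd (Fintype.card F))
    (n : ℕ) (hn : n = (Fintype.card F + 1) / 2)
    (s : F) (hs0 : s ≠ 0) (hs1 : s ≠ 1) (hs2 : s ≠ -1)
    (hplus : IsSquare ((1 + s) / 2)) (hplus0 : (1 + s) / 2 ≠ 0)
    (hminus : ¬ IsSquare ((1 - s) / 2)) :
    ∀ x : F, x ^ n + (1 - x) ^ n = s → x = (1 + s) / 2 ∨ x = (1 - s) / 2 := by
  have hchar : ringChar F ≠ 2 := by
    intro h
    have := FiniteField.even_card_of_char_two h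
    rcases hodd with ⟨k, hk⟩
    omega
  have h2 : (2 : F) ≠ 0 := Ring.two_ne_zero hchar
  have h2n : 2 * n = Fintype.card F + 1 := by
    rcases hodd with ⟨k, hk⟩
    omega
  have key : ∀ y : F, y ^ n = y ∨ y ^ n = -y := by
    intro y
    have hsq : (y ^ n) ^ 2 = y ^ 2 := by
      rw [← pow_mul, mul_comm n 2, h2n, pow_succ, FiniteField.pow_card, sq]
    exact sq_eq_sq_iff_eq_or_eq_neg.mp hsq
  intro x hx
  rcases key x with h1 | h1 <;> rcases key (1 - x) with h3 | h3 <;>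
      rw [h1, h3] at hx
  · exfalso; apply hs1; linear_combination -hx
  · left; field_simp; linear_combination hx
  · right; field_simp; linear_combination -hx
  · exfalso; apply hs2; linear_combination -hx
end

section
/- Let q be an odd prime power, n=(q+1)/2, s ∈ F_q with s ∉ {0,1,-1}, and w ∈ F_q with both (1+w)/2 and (1-w)/2 non-squares in F_q. Suppose ρ((1+s)/2)=-1 and ρ((1-s)/2)=1. Then every root x of y^2 - (1+sw)y + (s+w)^2/4 in the algebraic closure satisfies x^n + (1-x)^n = s, and this quadratic is irreducible over F_q. -/
open Polynomial

theorem stmt5 (F : Type*) [Field F] [Fintype F] (hodd : Odd (Fintype.card F))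
    (n : ℕ) (hn : n = (Fintype.card F + 1) / 2)
    (s w : F) (hs0 : s ≠ 0) (hs1 : s ≠ 1) (hs2 : s ≠ -1)
    (hw1 : ¬ IsSquare ((1 + w) / 2)) (hw2 : ¬ IsSquare ((1 - w) / 2))
    (hsp : ¬ IsSquare ((1 + s) / 2))
    (hsm : IsSquare ((1 - s) / 2)) (hsm0 : (1 - s) / 2 ≠ 0) :
    (∀ x : AlgebraicClosure F,
        x ^ 2 - algebraMap F (AlgebraicClosure F) (1 + s * w) * x
          + algebraMap F (AlgebraicClosure F) ((s + w) ^ 2 / 4) = 0 →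
        x ^ n + (1 - x) ^ n = algebraMap F (AlgebraicClosure F) s) ∧
      Irreducible (X ^ 2 - C (1 + s * w) * X + C ((s + w) ^ 2 / 4) : F[X]) := by
  classical
  obtain ⟨m, hm⟩ := hodd
  have hchar : ringChar F ≠ 2 := by
    intro h
    have := FiniteField.even_card_of_char_two (F := F) h
    omega
  have h2 : (2 : F) ≠ 0 := Ring.two_ne_zero hchar
  have hm2 : Fintype.card F / 2 = m := by omega
  have hnm : n = m + 1 := by omega
  have hmpos : m ≠ 0 := by
    have := Fintype.one_lt_card (α := F)
    omega
  set a : F := (1 + s) / 2 with hadef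
  set b : F := (1 - s) / 2 with hbdef
  set c : F := (1 + w) / 2 with hcdef
  set d : F := (1 - w) / 2 with hddef
  have ha0 : a ≠ 0 := fun h => hsp (by rw [h]; exact ⟨0, by simp⟩)
  have hc0 : c ≠ 0 := fun h => hw1 (by rw [h]; exact ⟨0, by simp⟩)
  have hd0 : d ≠ 0 := fun h => hw2 (by rw [h]; exact ⟨0, by simp⟩)
  have hpa : a ^ m = -1 := by
    have := FiniteField.pow_dichotomy hchar ha0
    rw [hm2] at this
    rcases this with h | h
    · exact absurd ((FiniteField.isSquare_iff hchar ha0).mpr (by rw [hm2]; exact h)) hsp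
    · exact h
  have hpc : c ^ m = -1 := by
    have := FiniteField.pow_dichotomy hchar hc0
    rw [hm2] at this
    rcases this with h | h
    · exact absurd ((FiniteField.isSquare_iff hchar hc0).mpr (by rw [hm2]; exact h)) hw1
    · exact h
  have hpd : d ^ m = -1 := by
    have := FiniteField.pow_dichotomy hchar hd0
    rw [hm2] at this
    rcases this with h | h
    · exact absurd ((FiniteField.isSquare_iff hchar hd0).mpr (by rw [hm2]; exact h)) hw2
    · exact h
  have hpb : b ^ m = 1 := by
    have := (FiniteField.isSquare_iff hchar hsm0).mp hsm
    rwa [hm2] at this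
  -- algebraic identities in F
  have hab : a + b = 1 := by rw [hadef, hbdef]; field_simp; norm_num
  have hcd : c + d = 1 := by rw [hcdef, hddef]; field_simp; norm_num
  have hacbd : a * c - b * d = (s + w) / 2 := by
    rw [hadef, hbdef, hcdef, hddef]; field_simp; ring
  have hadbc : a * d - b * c = (s - w) / 2 := by
    rw [hadef, hbdef, hcdef, hddef]; field_simp; ring
  have hsumid : 2 * (a * c + b * d) = 1 + s * w := by
    rw [hadef, hbdef, hcdef, hddef]; field_simp; ring
  have hprodid : (a * c - b * d) ^ 2 = (s + w) ^ 2 / 4 := by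
    rw [hacbd, div_pow, show (4 : F) = 2 ^ 2 by norm_num]
  -- characteristic setup
  set p := ringChar F with hpdef
  haveI : CharP F p := ringChar.charP F
  haveI hKchar : CharP (AlgebraicClosure F) p :=
    charP_of_injective_algebraMap (algebraMap F (AlgebraicClosure F)).injective p
  obtain ⟨k, hpk, hcard⟩ := FiniteField.card F p
  haveI : Fact p.Prime := ⟨hpk⟩
  set f : F →+* AlgebraicClosure F := algebraMap F (AlgebraicClosure F) with hfdef
  have frobA : ∀ u v : AlgebraicClosure F,
      (u + v) ^ Fintype.card F = u ^ Fintype.card F + v ^ Fintype.card F := by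
    intro u v; rw [hcard]; exact add_pow_char_pow u v p k
  have frobS : ∀ u v : AlgebraicClosure F,
      (u - v) ^ Fintype.card F = u ^ Fintype.card F - v ^ Fintype.card F := by
    intro u v; rw [hcard]; exact sub_pow_char_pow u v k
  have pw : ∀ (z : AlgebraicClosure F) (y : F), z ^ 2 = f y →
      z ^ Fintype.card F = f (y ^ m) * z := by
    intro z y hz
    calc z ^ Fintype.card F = (z ^ 2) ^ m * z := by rw [hm, pow_succ, pow_mul]
    _ = f (y ^ m) * z := by rw [hz, map_pow]
  -- the key computation
  have key : ∀ α β γ δ : AlgebraicClosure F,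
      α ^ 2 = f a → β ^ 2 = f b → γ ^ 2 = f c → δ ^ 2 = f d →
      ((α * γ + β * δ) ^ 2) ^ n + (1 - (α * γ + β * δ) ^ 2) ^ n = f s := by
    intro α β γ δ hα hβ hγ hδ
    have hαq : α ^ Fintype.card F = -α := by
      rw [pw α a hα, hpa, map_neg, map_one, neg_one_mul]
    have hβq : β ^ Fintype.card F = β := by
      rw [pw β b hβ, hpb, map_one, one_mul]
    have hγq : γ ^ Fintype.card F = -γ := by
      rw [pw γ c hγ, hpc, map_neg, map_one, neg_one_mul]
    have hδq : δ ^ Fintype.card F = -δ := by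
      rw [pw δ d hδ, hpd, map_neg, map_one, neg_one_mul]
    have ht : (α * γ + β * δ) ^ Fintype.card F = α * γ - β * δ := by
      rw [frobA, mul_pow, mul_pow, hαq, hβq, hγq, hδq]; ring
    have hu : (α * δ - β * γ) ^ Fintype.card F = α * δ + β * γ := by
      rw [frobS, mul_pow, mul_pow, hαq, hβq, hγq, hδq]; ring
    have hpowsplit : ∀ z : AlgebraicClosure F,
        (z ^ 2) ^ n = z ^ Fintype.card F * z := by
      intro z
      rw [← pow_mul, show 2 * n = Fintype.card F + 1 by omega, pow_succ]
    have hx1 : ((α * γ + β * δ) ^ 2) ^ n = f ((s + w) / 2) := by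
      rw [hpowsplit, ht,
        show (α * γ - β * δ) * (α * γ + β * δ) = α ^ 2 * γ ^ 2 - β ^ 2 * δ ^ 2 by ring,
        hα, hβ, hγ, hδ, ← map_mul, ← map_mul, ← map_sub, hacbd]
    have h1mx : 1 - (α * γ + β * δ) ^ 2 = (α * δ - β * γ) ^ 2 := by
      have e1 : (α * γ + β * δ) ^ 2 + (α * δ - β * γ) ^ 2
          = (α ^ 2 + β ^ 2) * (γ ^ 2 + δ ^ 2) := by ring
      have e2 : (α ^ 2 + β ^ 2) * (γ ^ 2 + δ ^ 2) = 1 := by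
        rw [hα, hβ, hγ, hδ, ← map_add, ← map_add, hab, hcd, map_one, one_mul]
      linear_combination - e1 - e2
    have hx2 : ((α * δ - β * γ) ^ 2) ^ n = f ((s - w) / 2) := by
      rw [hpowsplit, hu,
        show (α * δ + β * γ) * (α * δ - β * γ) = α ^ 2 * δ ^ 2 - β ^ 2 * γ ^ 2 by ring,
        hα, hβ, hγ, hδ, ← map_mul, ← map_mul, ← map_sub, hadbc]
    rw [hx1, h1mx, hx2, ← map_add]
    congr 1
    field_simp
    ring
  obtain ⟨α, hα⟩ := IsAlgClosed.exists_pow_nat_eq (k := AlgebraicClosure F) (f a) (n := 2)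
    (by norm_num)
  obtain ⟨β, hβ⟩ := IsAlgClosed.exists_pow_nat_eq (k := AlgebraicClosure F) (f b) (n := 2)
    (by norm_num)
  obtain ⟨γ, hγ⟩ := IsAlgClosed.exists_pow_nat_eq (k := AlgebraicClosure F) (f c) (n := 2)
    (by norm_num)
  obtain ⟨δ, hδ⟩ := IsAlgClosed.exists_pow_nat_eq (k := AlgebraicClosure F) (f d) (n := 2)
    (by norm_num)
  constructor
  · intro x hx
    have hsum : (α * γ + β * δ) ^ 2 + (α * γ - β * δ) ^ 2 = f (1 + s * w) := by
      have step : (α * γ + β * δ) ^ 2 + (α * γ - β * δ) ^ 2 = f ((1 + 1) * (a * c + b * d)) := by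
        simp only [map_mul, map_add, map_one]
        rw [← hα, ← hβ, ← hγ, ← hδ]
        ring
      rw [step]
      congr 1
      linear_combination hsumid
    have hprod : (α * γ + β * δ) ^ 2 * (α * γ - β * δ) ^ 2 = f ((s + w) ^ 2 / 4) := by
      have step : (α * γ + β * δ) ^ 2 * (α * γ - β * δ) ^ 2 = f ((a * c - b * d) ^ 2) := by
        simp only [map_pow, map_sub, map_mul]
        rw [← hα, ← hβ, ← hγ, ← hδ]
        ring
      rw [step, hprodid]
    have hfac : (x - (α * γ + β * δ) ^ 2) * (x - (α * γ - β * δ) ^ 2) = 0 := by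
      rw [show (x - (α * γ + β * δ) ^ 2) * (x - (α * γ - β * δ) ^ 2)
          = x ^ 2 - ((α * γ + β * δ) ^ 2 + (α * γ - β * δ) ^ 2) * x
            + (α * γ + β * δ) ^ 2 * (α * γ - β * δ) ^ 2 by ring,
        hsum, hprod]
      exact hx
    rcases mul_eq_zero.mp hfac with h | h
    · rw [sub_eq_zero.mp h]
      exact key α β γ δ hα hβ hγ hδ
    · rw [sub_eq_zero.mp h]
      have hβ' : (-β) ^ 2 = f b := by rw [neg_sq]; exact hβ
      have := key α (-β) γ δ hα hβ' hγ hδ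
      rwa [show α * γ + -β * δ = α * γ - β * δ by ring] at this
  · -- irreducibility
    have hD : ¬ IsSquare ((1 + s * w) ^ 2 - (s + w) ^ 2) := by
      intro hsq
      have hfac : (1 + s * w) ^ 2 - (s + w) ^ 2 = (2 * a) * (2 * b) * ((2 * c) * (2 * d)) := by
        rw [hadef, hbdef, hcdef, hddef]
        field_simp
        ring
      have h4 : ((2 : F) ^ m) ^ 2 = 1 := by
        rw [← pow_mul, show m * 2 = Fintype.card F - 1 by omega]
        exact FiniteField.pow_card_sub_one_eq_one 2 h2
      have hDm : ((1 + s * w) ^ 2 - (s + w) ^ 2) ^ m = -1 := by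
        rw [hfac, mul_pow, mul_pow, mul_pow, mul_pow, mul_pow, mul_pow, mul_pow,
          hpa, hpb, hpc, hpd]
        linear_combination (-(((2 : F) ^ m) ^ 2) - 1) * h4
      have hD0 : (1 + s * w) ^ 2 - (s + w) ^ 2 ≠ 0 := by
        intro h
        rw [h, zero_pow hmpos] at hDm
        exact one_ne_zero (neg_eq_zero.mp hDm.symm)
      have := (FiniteField.isSquare_iff hchar hD0).mp hsq
      rw [hm2, hDm] at this
      exact h2 (by linear_combination - this)
    have h4F : (4 : F) ≠ 0 := by
      intro h
      exact h2 (by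
        have : (2 : F) * 2 = 0 := by rw [show (2 : F) * 2 = 4 by norm_num, h]
        rcases mul_eq_zero.mp this with h' | h' <;> exact h')
    have hdisc : ∀ t : F, discrim 1 (-(1 + s * w)) ((s + w) ^ 2 / 4) ≠ t ^ 2 := by
      intro t ht
      apply hD
      refine ⟨t, ?_⟩
      rw [← sq]
      rw [← ht, discrim]
      field_simp
    have heq : (X ^ 2 - C (1 + s * w) * X + C ((s + w) ^ 2 / 4) : F[X])
        = C 1 * X ^ 2 + C (-(1 + s * w)) * X + C ((s + w) ^ 2 / 4) := by
      rw [map_neg, map_one]; ring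
    rw [heq]
    have hdeg : (C 1 * X ^ 2 + C (-(1 + s * w)) * X + C ((s + w) ^ 2 / 4) : F[X]).natDegree
        = 2 := natDegree_quadratic one_ne_zero
    rw [Polynomial.irreducible_iff_roots_eq_zero_of_degree_le_three (by omega) (by omega)]
    have hne : (C 1 * X ^ 2 + C (-(1 + s * w)) * X + C ((s + w) ^ 2 / 4) : F[X]) ≠ 0 := by
      intro h
      rw [h, natDegree_zero] at hdeg
      exact two_ne_zero hdeg.symm
    rw [Multiset.eq_zero_iff_forall_notMem]
    intro r hr
    rw [mem_roots hne] at hr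
    have hev : (1 : F) * (r * r) + (-(1 + s * w)) * r + (s + w) ^ 2 / 4 = 0 := by
      have := hr
      simp only [IsRoot, eval_add, eval_mul, eval_pow, eval_C, eval_X] at this
      linear_combination this
    exact quadratic_ne_zero_of_discrim_ne_sq hdisc r hev
end

section
/- Let q be an odd prime power, n=(q+1)/2, and v ∈ F_q with both v and 1-v non-squares in F_q. Then the polynomial y^2 - y + v/4 is irreducible over F_q and each of its roots x in F_{q^2} satisfies x^n + (1-x)^n = 0. -/
/-!
A root `x` satisfies `(2x - 1)² = 1 - v`, so the polynomial has no root in `F`, and by Euler's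
criterion the Frobenius `z ↦ z^q` negates `2x - 1`, i.e. `x^q = 1 - x`. For `n = (q + 1)/2` this
gives `x^(2n) = x(1 - x) = v/4`, while `(x(1 - x))^n = (v/4)^n = -v/4` because `v/4` is a
non-square; hence `x^n (x^n + (1 - x)^n) = 0` with `x ≠ 0`.
-/

open Polynomial

theorem four_ne_zero_of_two_ne_zero {R : Type*} [Semiring R] [NoZeroDivisors R]
    (h2 : (2 : R) ≠ 0) : (4 : R) ≠ 0 := by
  rw [show (4 : R) = 2 * 2 by norm_num]
  exact mul_ne_zero h2 h2

theorem sq_two_mul_sub_one_eq_of_root {K : Type*} [Field K] (h2 : (2 : K) ≠ 0) {x c : K}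
    (hx : x ^ 2 - x + c / 4 = 0) : (2 * x - 1) ^ 2 = 1 - c := by
  have hc : 4 * (c / 4) = c := mul_div_cancel₀ c (four_ne_zero_of_two_ne_zero h2)
  linear_combination 4 * hx - hc

theorem irreducible_X_sq_sub_X_add_C_div_four {K : Type*} [Field K] (h2 : (2 : K) ≠ 0) {c : K}
    (hc : ¬IsSquare (1 - c)) : Irreducible (X ^ 2 - X + C (c / 4) : K[X]) := by
  have hdeg : (X ^ 2 - X + C (c / 4) : K[X]).natDegree = 2 := by
    compute_degree!
  rw [irreducible_iff_roots_eq_zero_of_degree_le_three (by rw [hdeg]) (by rw [hdeg]; norm_num),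
    Multiset.eq_zero_iff_forall_notMem]
  intro r hr
  have hroot : r ^ 2 - r + c / 4 = 0 := by
    simpa using (mem_roots (ne_zero_of_natDegree_gt (n := 0) (by omega))).mp hr
  exact hc ⟨2 * r - 1, by rw [← sq_two_mul_sub_one_eq_of_root h2 hroot, sq]⟩

namespace FiniteField

variable {F : Type*} [Field F] [Fintype F]

theorem pow_card_div_two_eq_neg_one_of_not_isSquare (hF : ringChar F ≠ 2) {a : F}
    (ha : ¬IsSquare a) : a ^ (Fintype.card F / 2) = -1 := by
  have ha0 : a ≠ 0 := by rintro rfl; exact ha IsSquare.zero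
  exact (pow_dichotomy hF ha0).resolve_left (mt (isSquare_iff hF ha0).mpr ha)

theorem pow_card_eq_neg_of_sq_eq_algebraMap {L : Type*} [CommRing L] [Algebra F L]
    (hF : ringChar F ≠ 2) {a : F} (ha : ¬IsSquare a) {z : L} (hz : z ^ 2 = algebraMap F L a) :
    z ^ Fintype.card F = -z := by
  calc z ^ Fintype.card F = z * (z ^ 2) ^ (Fintype.card F / 2) := by
        rw [← pow_mul, ← pow_succ', Nat.two_mul_odd_div_two (odd_card_of_char_ne_two hF),
          Nat.sub_add_cancel Fintype.card_pos]
    _ = -z := by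
        rw [hz, ← map_pow, pow_card_div_two_eq_neg_one_of_not_isSquare hF ha, map_neg, map_one,
          mul_neg_one]

theorem pow_card_eq_one_sub_of_root {L : Type*} [Field L] [Algebra F L] (hF : ringChar F ≠ 2)
    {v : F} (hv1 : ¬IsSquare (1 - v)) {x : L} (hx : x ^ 2 - x + algebraMap F L (v / 4) = 0) :
    x ^ Fintype.card F = 1 - x := by
  have h2 : (2 : L) ≠ 0 := by
    simpa only [map_ofNat] using (map_ne_zero (algebraMap F L)).mpr (Ring.two_ne_zero hF)
  have hsq : (2 * x - 1) ^ 2 = algebraMap F L (1 - v) := by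
    rw [map_div₀, map_ofNat] at hx
    rw [sq_two_mul_sub_one_eq_of_root h2 hx, map_sub, map_one]
  have hfrob : (2 * x - 1) ^ Fintype.card F = 2 * x ^ Fintype.card F - 1 := by
    simpa only [map_mul, map_ofNat, map_one, frobeniusAlgHom_apply]
      using map_sub (frobeniusAlgHom F L) (2 * x) 1
  have h : 2 * (x ^ Fintype.card F - (1 - x)) = 0 := by
    linear_combination hfrob.symm.trans (pow_card_eq_neg_of_sq_eq_algebraMap hF hv1 hsq)
  exact sub_eq_zero.mp ((mul_eq_zero.mp h).resolve_left h2)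

theorem root_pow_add_one_sub_root_pow_eq_zero {L : Type*} [Field L] [Algebra F L]
    (hF : ringChar F ≠ 2) {v : F} (hv : ¬IsSquare v) (hv1 : ¬IsSquare (1 - v)) {x : L}
    (hx : x ^ 2 - x + algebraMap F L (v / 4) = 0) :
    x ^ ((Fintype.card F + 1) / 2) + (1 - x) ^ ((Fintype.card F + 1) / 2) = 0 := by
  set q := Fintype.card F
  set c := algebraMap F L (v / 4)
  have hq : q % 2 = 1 := odd_card_of_char_ne_two hF
  have hv4 : ¬IsSquare (v / 4) := fun ⟨s, hs⟩ ↦ hv ⟨2 * s, by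
    rw [← mul_div_cancel₀ v (four_ne_zero_of_two_ne_zero (Ring.two_ne_zero hF)), hs]
    ring⟩
  have hc : c ^ (q / 2) = -1 := by
    rw [← map_pow, pow_card_div_two_eq_neg_one_of_not_isSquare hF hv4, map_neg, map_one]
  have hxy : x * (1 - x) = c := by linear_combination -hx
  have hx0 : x ≠ 0 := by
    rintro rfl
    exact hv4 ⟨0, (algebraMap F L).injective (by simpa [c] using hxy.symm)⟩
  have key : x ^ ((q + 1) / 2) * (x ^ ((q + 1) / 2) + (1 - x) ^ ((q + 1) / 2)) = 0 :=
    calc _ = x ^ q * x + (x * (1 - x)) ^ (q / 2 + 1) := by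
          rw [mul_add, ← pow_add, ← mul_pow, ← pow_succ]
          congr 2 <;> omega
      _ = 0 := by
          rw [pow_card_eq_one_sub_of_root hF hv1 hx, pow_succ, hxy, hc, ← hxy]
          ring
  exact (mul_eq_zero.mp key).resolve_left (pow_ne_zero _ hx0)

end FiniteField

theorem stmt6 (F : Type*) [Field F] [Fintype F] (hodd : Odd (Fintype.card F))
    (n : ℕ) (hn : n = (Fintype.card F + 1) / 2)
    (v : F) (hv : ¬ IsSquare v) (hv1 : ¬ IsSquare (1 - v)) :
    Irreducible (X ^ 2 - X + C (v / 4) : F[X]) ∧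
      ∀ x : AlgebraicClosure F,
        x ^ 2 - x + algebraMap F (AlgebraicClosure F) (v / 4) = 0 →
        x ^ n + (1 - x) ^ n = 0 := by
  have hF : ringChar F ≠ 2 := fun h ↦
    Nat.not_even_iff_odd.mpr hodd (Nat.even_iff.mpr (FiniteField.even_card_of_char_two h))
  subst hn
  exact ⟨irreducible_X_sq_sub_X_add_C_div_four (Ring.two_ne_zero hF) hv1,
    fun x hx ↦ FiniteField.root_pow_add_one_sub_root_pow_eq_zero hF hv hv1 hx⟩
end

section
/- Let q be an odd prime power, n=(q+1)/2, and s ∈ F_q with s ∉ {0,1,-1}. The polynomial g_s(y)=y^n+(1-y)^n - s has an irreducible factor over F_q of degree greater than 2 if and only if 1-s^2 is a nonzero square in F_q with 1-s^2 ≠ 1 - equivalently ρ(1-s^2)=1 and s ≠ 0. -/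
open Polynomial

private lemma hchar_ne_two {F : Type*} [Field F] [Fintype F] (hodd : Odd (Fintype.card F)) :
    ringChar F ≠ 2 := by
  intro h
  have h2 := FiniteField.even_card_iff_char_two.mp h
  rw [Nat.odd_iff] at hodd
  omega

private lemma euler_nonsq {F : Type*} [Field F] [Fintype F] (hodd : Odd (Fintype.card F))
    {x : F} (hx : x ≠ 0) (h : ¬IsSquare x) : x ^ (Fintype.card F / 2) = -1 := by
  obtain ⟨m, hm⟩ := hodd
  have h1 : x ^ (Fintype.card F / 2) * x ^ (Fintype.card F / 2) = 1 := by
    rw [← pow_add]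
    have h2 : Fintype.card F / 2 + Fintype.card F / 2 = Fintype.card F - 1 := by omega
    rw [h2]
    exact FiniteField.pow_card_sub_one_eq_one x hx
  rcases mul_self_eq_one_iff.mp h1 with h2 | h2
  · exact absurd ((FiniteField.isSquare_iff (hchar_ne_two ⟨m, hm⟩) hx).mpr h2) h
  · exact h2

private lemma fixedpts {F L : Type*} [Field F] [Fintype F] [Field L] (f0 : F →+* L) {x : L}
    (hx : x ^ Fintype.card F = x) : ∃ u : F, f0 u = x := by
  classical
  have hq1 : 1 < Fintype.card F := Fintype.one_lt_card
  set q := Fintype.card F with hq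
  set P : L[X] := X ^ q - X with hP
  have hdX : (X : L[X]).natDegree < (X ^ q : L[X]).natDegree := by
    rw [natDegree_X_pow, natDegree_X]; omega
  have hPd : P.natDegree = q := by
    rw [hP, natDegree_sub_eq_left_of_natDegree_lt hdX, natDegree_X_pow]
  have hP0 : P ≠ 0 := by
    intro h; rw [h, natDegree_zero] at hPd; omega
  have hroot : ∀ u : F, P.IsRoot (f0 u) := by
    intro u
    simp only [hP, IsRoot, eval_sub, eval_pow, eval_X]
    rw [← map_pow, FiniteField.pow_card, sub_self]
  have hcardS : (Finset.univ.image f0).card = q := by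
    rw [Finset.card_image_of_injective _ f0.injective, Finset.card_univ]
  have hsub : Finset.univ.image f0 ⊆ P.roots.toFinset := by
    intro t ht
    rw [Finset.mem_image] at ht
    obtain ⟨u, _, rfl⟩ := ht
    rw [Multiset.mem_toFinset, mem_roots']
    exact ⟨hP0, hroot u⟩
  have hcard2 : P.roots.toFinset.card ≤ q :=
    le_trans (Multiset.toFinset_card_le _) (le_trans (card_roots' P) (le_of_eq hPd))
  have heq : Finset.univ.image f0 = P.roots.toFinset :=
    Finset.eq_of_subset_of_card_le hsub (by omega)
  have hxr : x ∈ P.roots.toFinset := by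
    rw [Multiset.mem_toFinset, mem_roots']
    refine ⟨hP0, ?_⟩
    simp only [hP, IsRoot, eval_sub, eval_pow, eval_X, hx, sub_self]
  rw [← heq, Finset.mem_image] at hxr
  obtain ⟨u, _, hu⟩ := hxr
  exact ⟨u, hu⟩

private lemma card_le_of_all_fixed {E : Type*} [Field E] [Fintype E] {N : ℕ} (hN : 1 < N)
    (hall : ∀ x : E, x ^ N = x) : Fintype.card E ≤ N := by
  classical
  set P : E[X] := X ^ N - X with hP
  have hdX : (X : E[X]).natDegree < (X ^ N : E[X]).natDegree := by
    rw [natDegree_X_pow, natDegree_X]; omega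
  have hPd : P.natDegree = N := by
    rw [hP, natDegree_sub_eq_left_of_natDegree_lt hdX, natDegree_X_pow]
  have hP0 : P ≠ 0 := by
    intro h; rw [h, natDegree_zero] at hPd; omega
  have hsub : Finset.univ ⊆ P.roots.toFinset := by
    intro t _
    rw [Multiset.mem_toFinset, mem_roots']
    refine ⟨hP0, ?_⟩
    simp only [hP, IsRoot, eval_sub, eval_pow, eval_X, hall t, sub_self]
  calc Fintype.card E = Finset.univ.card := (Finset.card_univ).symm
    _ ≤ P.roots.toFinset.card := Finset.card_le_card hsub
    _ ≤ Multiset.card P.roots := Multiset.toFinset_card_le _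
    _ ≤ P.natDegree := card_roots' P
    _ = N := hPd


private lemma Froot {F : Type*} [Field F] [Fintype F] (hodd : Odd (Fintype.card F)) {n : ℕ}
    (h2n : 2 * n = Fintype.card F + 1) {s y0 : F} (hs1 : s ^ 2 ≠ 1)
    (heq : y0 ^ n + (1 - y0) ^ n = s) (hsq : IsSquare (1 - s ^ 2)) : False := by
  obtain ⟨m, hm⟩ := hodd
  have hn : n = m + 1 := by omega
  have hchar : ringChar F ≠ 2 := by
    intro h
    have h2 := FiniteField.even_card_iff_char_two.mp h
    omega
  have h2F : (2 : F) ≠ 0 := Ring.two_ne_zero hchar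
  have hy0 : y0 ≠ 0 := by
    rintro rfl
    rw [hn, zero_pow (Nat.succ_ne_zero m), sub_zero, one_pow, zero_add] at heq
    exact hs1 (by rw [← heq]; ring)
  have hy1 : y0 ≠ 1 := by
    rintro rfl
    rw [hn, one_pow, sub_self, zero_pow (Nat.succ_ne_zero m), add_zero] at heq
    exact hs1 (by rw [← heq]; ring)
  have hy1' : (1 : F) - y0 ≠ 0 := sub_ne_zero.mpr (Ne.symm hy1)
  have hprod : y0 * (1 - y0) ≠ 0 := mul_ne_zero hy0 hy1'
  have hu : y0 ^ m * y0 ^ m = 1 := by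
    rw [← pow_add]
    have h2 : m + m = Fintype.card F - 1 := by omega
    rw [h2]
    exact FiniteField.pow_card_sub_one_eq_one y0 hy0
  have hv : (1 - y0) ^ m * (1 - y0) ^ m = 1 := by
    rw [← pow_add]
    have h2 : m + m = Fintype.card F - 1 := by omega
    rw [h2]
    exact FiniteField.pow_card_sub_one_eq_one _ hy1'
  have heq' : y0 ^ m * y0 + (1 - y0) ^ m * (1 - y0) = s := by
    rw [← pow_succ, ← pow_succ, ← hn]; exact heq
  have mixed : s ^ 2 = 1 - 4 * (y0 * (1 - y0)) → y0 ^ m * (1 - y0) ^ m = -1 → False := by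
    intro hs2 huv
    obtain ⟨d, hd⟩ := hsq
    have h4 : (4 : F) ≠ 0 := by
      intro h
      exact h2F (mul_self_eq_zero.mp (by rw [show (2:F)*2 = 4 from by norm_num, h]))
    have hdd : d * d = 4 * (y0 * (1 - y0)) := by linear_combination -hd - hs2
    have ht : y0 * (1 - y0) = (d / 2) * (d / 2) := by
      rw [div_mul_div_comm, hdd, show (2:F)*2 = 4 from by norm_num,
        mul_div_cancel_left₀ _ h4]
    have ht0 : d / 2 ≠ 0 := by
      rintro h
      rw [h, mul_zero] at ht
      exact hprod ht
    have h1 : (y0 * (1 - y0)) ^ m = 1 := by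
      rw [ht, ← pow_two, ← pow_mul]
      have h2 : 2 * m = Fintype.card F - 1 := by omega
      rw [h2]
      exact FiniteField.pow_card_sub_one_eq_one _ ht0
    rw [mul_pow, huv] at h1
    exact h2F (by linear_combination -h1)
  rcases mul_self_eq_one_iff.mp hu with h1 | h1 <;> rcases mul_self_eq_one_iff.mp hv with h2 | h2
  · rw [h1, h2, one_mul, one_mul] at heq'
    exact hs1 (by rw [← heq']; ring)
  · refine mixed ?_ (by rw [h1, h2, one_mul])
    rw [h1, h2, one_mul] at heq'
    linear_combination (-(s + 2*y0 - 1)) * heq'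
  · refine mixed ?_ (by rw [h1, h2, mul_one])
    rw [h1, h2, one_mul] at heq'
    linear_combination (-(s + 1 - 2*y0)) * heq'
  · rw [h1, h2] at heq'
    exact hs1 (by linear_combination (1 - s) * heq')

private lemma quadClass {F L : Type*} [Field F] [Fintype F] [Field L]
    (f0 : F →+* L) (ψ : L →+* L) (hψ : ∀ x : L, ψ x = x ^ Fintype.card F)
    {s : F} (hs1 : s ^ 2 ≠ 1) (h2F : (2 : F) ≠ 0) {ξ η : L} (hmul : ξ * η = 1)
    (hadd : ξ + η = 2 * f0 s) :
    (¬IsSquare (s ^ 2 - 1) → ψ ξ = η) ∧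
      (IsSquare (s ^ 2 - 1) →
        ∃ x0 : F, ξ = f0 x0 ∧ x0 ≠ 0 ∧ x0 ^ 2 ≠ 1 ∧ x0 ^ 2 = 2 * s * x0 - 1) := by
  have hξ0 : ξ ≠ 0 := left_ne_zero_of_mul_eq_one hmul
  have hquad : ξ ^ 2 - 2 * f0 s * ξ + 1 = 0 := by
    have h : ξ ^ 2 - (ξ + η) * ξ + ξ * η = 0 := by ring
    rw [hadd, hmul] at h
    linear_combination h
  constructor
  · intro hns
    have hψs : ψ (f0 s) = f0 s := by rw [hψ, ← map_pow, FiniteField.pow_card]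
    have hψ2 : ψ (2 : L) = 2 := map_ofNat ψ 2
    have hq2 : ψ ξ ^ 2 - 2 * f0 s * ψ ξ + 1 = 0 := by
      have h := congrArg ψ hquad
      rw [map_add, map_sub, map_pow, map_mul, map_mul, hψs, hψ2, map_one, map_zero] at h
      exact h
    have hfac : (ψ ξ - ξ) * (ψ ξ - η) = 0 := by
      have expand : (ψ ξ - ξ) * (ψ ξ - η) = ψ ξ ^ 2 - (ξ + η) * ψ ξ + ξ * η := by ring
      rw [expand, hadd, hmul]
      linear_combination hq2
    rcases mul_eq_zero.mp hfac with h | h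
    · exfalso
      have hfixed : ξ ^ Fintype.card F = ξ := by
        rw [← hψ]; linear_combination h
      obtain ⟨u, hu⟩ := fixedpts f0 hfixed
      have hF0 : f0 (u ^ 2 - 2 * s * u + 1) = 0 := by
        rw [map_add, map_sub, map_pow, map_mul, map_mul, map_ofNat, map_one, hu]
        exact hquad
      have hF : u ^ 2 - 2 * s * u + 1 = 0 := by
        exact (_root_.map_eq_zero f0).mp hF0
      exact hns ⟨u - s, by linear_combination -hF⟩
    · linear_combination h
  · rintro ⟨c, hc⟩
    have hsum : f0 (s + c) + f0 (s - c) = 2 * f0 s := by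
      rw [← map_add, show s + c + (s - c) = 2 * s by ring, map_mul, map_ofNat]
    have hAB : f0 (s + c) * f0 (s - c) = 1 := by
      rw [← map_mul, show (s + c) * (s - c) = s^2 - c*c by ring, ← hc]
      rw [show s^2 - (s^2 - 1) = 1 by ring, map_one]
    have hfac : (ξ - f0 (s + c)) * (ξ - f0 (s - c)) = 0 := by
      have expand : (ξ - f0 (s + c)) * (ξ - f0 (s - c))
          = ξ ^ 2 - (f0 (s + c) + f0 (s - c)) * ξ + f0 (s + c) * f0 (s - c) := by ring
      rw [expand, hsum, hAB]
      linear_combination hquad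
    have key : ∀ x0 : F, ξ = f0 x0 → x0 ^ 2 = 2 * s * x0 - 1 →
        ∃ x0 : F, ξ = f0 x0 ∧ x0 ≠ 0 ∧ x0 ^ 2 ≠ 1 ∧ x0 ^ 2 = 2 * s * x0 - 1 := by
      intro x0 hx0 hq
      refine ⟨x0, hx0, ?_, ?_, hq⟩
      · rintro rfl
        rw [map_zero] at hx0
        exact hξ0 hx0
      · intro h1
        have h2 : (2 : F) * (s * x0 - 1) = 0 := by linear_combination h1 - hq
        have h3 : s * x0 = 1 := by
          rcases mul_eq_zero.mp h2 with h3 | h3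
          · exact absurd h3 h2F
          · linear_combination h3
        exact hs1 (by linear_combination (s * x0 + 1) * h3 - s ^ 2 * h1)
    rcases mul_eq_zero.mp hfac with h | h
    · exact key (s + c) (sub_eq_zero.mp h) (by linear_combination -hc)
    · exact key (s - c) (sub_eq_zero.mp h) (by linear_combination -hc)

set_option maxHeartbeats 1000000 in
private lemma core2 {F E L : Type*} [Field F] [Fintype F] [Field E] [Fintype E] [Field L]
    [Algebra F E] [Algebra E L]
    (hodd : Odd (Fintype.card F)) (hoddE : Odd (Fintype.card E)) {n : ℕ}
    (h2n : 2 * n = Fintype.card F + 1)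
    {s : F} (hs0 : s ≠ 0) (hs1 : s ^ 2 ≠ 1)
    (ψ : L →+* L) (hψ : ∀ x : L, ψ x = x ^ Fintype.card F)
    {v : E} (hv : ¬IsSquare v) {r : L} (hr : r * r = algebraMap E L v)
    {y : E} (hy : y ^ n + (1 - y) ^ n = algebraMap F E s) :
    y ^ Fintype.card F ^ 2 = y ↔ ¬IsSquare (1 - s ^ 2) := by
  classical
  obtain ⟨m, hm⟩ := hodd
  have hodd' : Odd (Fintype.card F) := ⟨m, hm⟩
  set q := Fintype.card F with hqdef
  have hq3 : 3 ≤ q := by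
    have := Fintype.one_lt_card (α := F)
    omega
  have hcharF : ringChar F ≠ 2 := by
    intro h
    have h2 := FiniteField.even_card_iff_char_two.mp h
    omega
  have h2F : (2 : F) ≠ 0 := Ring.two_ne_zero hcharF
  have hcharE : ringChar E ≠ 2 := by
    intro h
    have h2 := FiniteField.even_card_iff_char_two.mp h
    rw [Nat.odd_iff] at hoddE
    omega
  set φ : E →+* L := algebraMap E L with hφdef
  set f0 : F →+* L := φ.comp (algebraMap F E) with hf0def
  have hs1ne : (1 : F) - s ^ 2 ≠ 0 := by
    intro h
    exact hs1 (by linear_combination -h)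
  have hs21ne : (s : F) ^ 2 - 1 ≠ 0 := by
    intro h
    exact hs1 (by linear_combination h)
  -- every element of E is a square in L
  have hsqL : ∀ x : E, IsSquare (φ x) := by
    intro x
    by_cases hx : IsSquare x
    · obtain ⟨t, ht⟩ := hx
      exact ⟨φ t, by rw [ht, map_mul]⟩
    · have hx0 : x ≠ 0 := by rintro rfl; exact hx ⟨0, by ring⟩
      have hv0 : v ≠ 0 := by rintro rfl; exact hv ⟨0, by ring⟩
      have hxv : IsSquare (x * v⁻¹) := by
        rw [FiniteField.isSquare_iff hcharE (mul_ne_zero hx0 (inv_ne_zero hv0))]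
        rw [mul_pow, euler_nonsq hoddE hx0 hx, inv_pow, euler_nonsq hoddE hv0 hv]
        norm_num
      obtain ⟨t, ht⟩ := hxv
      refine ⟨φ t * r, ?_⟩
      have hx' : x = t * t * v := by
        field_simp at ht
        linear_combination ht
      rw [hx', map_mul, map_mul]
      calc φ t * φ t * φ v = φ t * φ t * (r * r) := by rw [hr]
        _ = φ t * r * (φ t * r) := by ring
  obtain ⟨i0, hi0⟩ := hsqL (-1)
  have hii : i0 * i0 = -1 := by rw [← hi0, map_neg, map_one]
  obtain ⟨a, ha⟩ := hsqL y
  have ha' : a * a = φ y := ha.symm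
  obtain ⟨b, hb⟩ := hsqL (1 - y)
  have hb' : b * b = 1 - φ y := by rw [← hb, map_sub, map_one]
  set z : L := a + i0 * b with hzdef
  set w : L := a - i0 * b with hwdef
  have hzw : z * w = 1 := by
    rw [hzdef, hwdef]
    calc (a + i0 * b) * (a - i0 * b) = a * a - (i0 * i0) * (b * b) := by ring
      _ = φ y - (-1) * (1 - φ y) := by rw [hii, ha', hb']
      _ = 1 := by ring
  have hzne : z ≠ 0 := left_ne_zero_of_mul_eq_one hzw
  have hψadd : ∀ x t : L, (x + t) ^ q = x ^ q + t ^ q := by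
    intro x t
    rw [← hψ, ← hψ, ← hψ, map_add]
  have hψsub : ∀ x t : L, (x - t) ^ q = x ^ q - t ^ q := by
    intro x t
    rw [← hψ, ← hψ, ← hψ, map_sub]
  have hf0fix : ∀ u : F, f0 u ^ q = f0 u := by
    intro u
    rw [← map_pow, FiniteField.pow_card]
  have h2L : (2 : L) ≠ 0 := by
    intro h
    apply h2F
    apply f0.injective
    rw [map_ofNat, map_zero, h]
  -- the base equation in L
  have hApow : a ^ (q + 1) = φ (y ^ n) := by
    have h1 : a ^ (q + 1) = (a * a) ^ n := by
      rw [← pow_two, ← pow_mul, ← h2n]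
    rw [h1, ha', map_pow]
  have hBpow : b ^ (q + 1) = φ ((1 - y) ^ n) := by
    have h1 : b ^ (q + 1) = (b * b) ^ n := by
      rw [← pow_two, ← pow_mul, ← h2n]
    rw [h1, hb', map_pow, map_sub, map_one]
  have hAB : a ^ (q + 1) + b ^ (q + 1) = f0 s := by
    rw [hApow, hBpow, ← map_add, hy]
    rfl
  -- i0 ^ q
  have hm2 : q / 2 = m := by omega
  have hiq : i0 ^ q = f0 ((-1 : F) ^ m) * i0 := by
    have h1 : i0 ^ q = (i0 * i0) ^ m * i0 := by
      rw [← pow_two, ← pow_mul, ← pow_succ]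
      congr 1
      try omega
    rw [h1, hii]
    congr 1
    rw [map_pow, map_neg, map_one]
  -- z ^ (q^2) options, given y is fixed
  have hpow2 : ∀ x : L, x ^ q ^ 2 = (x ^ q) ^ q := by
    intro x
    rw [pow_two, pow_mul]
  have hiq2 : (i0 ^ q) ^ q = i0 := by
    rw [hiq, mul_pow, hf0fix, hiq, ← mul_assoc, ← map_mul]
    rw [show ((-1 : F) ^ m * (-1 : F) ^ m) = 1 by
      rw [← pow_add]; exact Even.neg_one_pow ⟨m, rfl⟩]
    rw [map_one, one_mul]
  have opts : y ^ q ^ 2 = y →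
      ((z ^ q) ^ q = z ∨ (z ^ q) ^ q = -z ∨ (z ^ q) ^ q = w ∨ (z ^ q) ^ q = -w) := by
    intro hfix
    have hφfix : (φ y ^ q) ^ q = φ y := by
      calc (φ y ^ q) ^ q = φ ((y ^ q) ^ q) := by rw [map_pow, map_pow]
        _ = φ (y ^ q ^ 2) := by rw [pow_two, pow_mul]
        _ = φ y := by rw [hfix]
    have haQ : (a ^ q) ^ q = a ∨ (a ^ q) ^ q = -a := by
      have h3 : ((a * a) ^ q) ^ q = a * a := by rw [ha']; exact hφfix
      rw [mul_pow, mul_pow] at h3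
      have h1 : ((a ^ q) ^ q - a) * ((a ^ q) ^ q + a) = 0 := by linear_combination h3
      rcases mul_eq_zero.mp h1 with h | h
      · exact Or.inl (by linear_combination h)
      · exact Or.inr (by linear_combination h)
    have hbQ : (b ^ q) ^ q = b ∨ (b ^ q) ^ q = -b := by
      have h3 : ((b * b) ^ q) ^ q = b * b := by
        rw [hb', hψsub, one_pow, hψsub, one_pow, hφfix]
      rw [mul_pow, mul_pow] at h3
      have h1 : ((b ^ q) ^ q - b) * ((b ^ q) ^ q + b) = 0 := by linear_combination h3
      rcases mul_eq_zero.mp h1 with h | h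
      · exact Or.inl (by linear_combination h)
      · exact Or.inr (by linear_combination h)
    have hz2e : (z ^ q) ^ q = (a ^ q) ^ q + (i0 ^ q) ^ q * (b ^ q) ^ q := by
      rw [hzdef, hψadd, mul_pow, hψadd, mul_pow]
    rw [hiq2] at hz2e
    rcases haQ with h | h <;> rcases hbQ with h' | h'
    · exact Or.inl (by rw [hz2e, h, h', hzdef])
    · exact Or.inr (Or.inr (Or.inl (by rw [hz2e, h, h', hwdef]; ring)))
    · exact Or.inr (Or.inr (Or.inr (by rw [hz2e, h, h', hwdef]; ring)))
    · exact Or.inr (Or.inl (by rw [hz2e, h, h', hzdef]; ring))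
  -- tail: if z is fixed by the square of Frobenius then so is y
  have h2q : (2 : L) ^ q = 2 := by
    rw [show (2 : L) = f0 2 from (map_ofNat f0 2).symm, hf0fix]
  have tail_fix : (z ^ q) ^ q = z → y ^ q ^ 2 = y := by
    intro hz2
    have hw2 : (w ^ q) ^ q = w := by
      have h1 : ((z * w) ^ q) ^ q = 1 := by rw [hzw, one_pow, one_pow]
      rw [mul_pow, mul_pow, hz2] at h1
      exact mul_left_cancel₀ hzne (h1.trans hzw.symm)
    have ha2 : (a ^ q) ^ q = a := by
      have h1 : ((z + w) ^ q) ^ q = z + w := by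
        rw [hψadd, hψadd, hz2, hw2]
      have hza : z + w = 2 * a := by rw [hzdef, hwdef]; ring
      rw [hza, mul_pow, mul_pow, h2q, h2q] at h1
      exact mul_left_cancel₀ h2L h1
    apply φ.injective
    calc φ (y ^ q ^ 2) = (φ y ^ q) ^ q := by rw [map_pow, pow_two, pow_mul]
      _ = ((a * a) ^ q) ^ q := by rw [ha']
      _ = a * a := by rw [mul_pow, mul_pow, ha2]
      _ = φ y := ha'
  -- tail: if z*z + w*w is in the image of f0 then y comes from F, contradiction when
  -- 1 - s^2 is a square
  have tail_range : IsSquare (1 - s ^ 2) → (∃ uu : F, z * z + w * w = f0 uu) → False := by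
    rintro hSq ⟨uu, huu⟩
    have hz2w2 : z * z + w * w = 4 * φ y - 2 := by
      rw [hzdef, hwdef]
      calc (a + i0 * b) * (a + i0 * b) + (a - i0 * b) * (a - i0 * b)
          = 2 * (a * a) + 2 * ((i0 * i0) * (b * b)) := by ring
        _ = 2 * φ y + 2 * (-1 * (1 - φ y)) := by rw [hii, ha', hb']
        _ = 4 * φ y - 2 := by ring
    have h4F : (4 : F) ≠ 0 := by
      intro h
      exact h2F (mul_self_eq_zero.mp (by rw [show (2 : F) * 2 = 4 by norm_num, h]))
    have h4L : (4 : L) ≠ 0 := by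
      intro h
      apply h4F
      apply f0.injective
      rw [map_ofNat, map_zero, h]
    have h4u : (4 : F) * ((uu + 2) / 4) = uu + 2 := by field_simp
    have h1 : (4 : L) * f0 ((uu + 2) / 4) = f0 uu + 2 := by
      rw [show (4 : L) = f0 4 from (map_ofNat f0 4).symm, ← map_mul, h4u, map_add, map_ofNat]
    have h2 : (4 : L) * φ y = f0 uu + 2 := by
      rw [← huu, hz2w2]; ring
    have hphiy : φ y = f0 ((uu + 2) / 4) := mul_left_cancel₀ h4L (h2.trans h1.symm)
    have hyE : algebraMap F E ((uu + 2) / 4) = y := by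
      apply φ.injective
      exact hphiy.symm
    have heqF : ((uu + 2) / 4) ^ n + (1 - (uu + 2) / 4) ^ n = s := by
      apply (algebraMap F E).injective
      rw [map_add, map_pow, map_pow, map_sub, map_one, hyE]
      exact hy
    exact Froot hodd' h2n hs1 heqF hSq
  by_cases hm1 : IsSquare (-1 : F)
  · -- -1 is a square in F
    have hε : (-1 : F) ^ m = 1 := by
      have h := (FiniteField.isSquare_iff hcharF (by norm_num : (-1 : F) ≠ 0)).mp hm1
      rwa [hm2] at h
    have hiq1 : i0 ^ q = i0 := by rw [hiq, hε, map_one, one_mul]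
    have hzq : z ^ q = a ^ q + i0 * b ^ q := by
      rw [hzdef, hψadd, mul_pow, hiq1]
    have hwq : w ^ q = a ^ q - i0 * b ^ q := by
      rw [hwdef, hψsub, mul_pow, hiq1]
    have hmulξη : (z ^ q * w) * (w ^ q * z) = 1 := by
      have h1 : (z ^ q * w) * (w ^ q * z) = (z * w) ^ q * (z * w) := by
        rw [mul_pow]; ring
      rw [h1, hzw, one_pow, one_mul]
    have haddξη : (z ^ q * w) + (w ^ q * z) = 2 * f0 s := by
      rw [hzq, hwq, hzdef, hwdef]
      linear_combination 2 * hAB - 2 * (b ^ q * b) * hii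
    obtain ⟨hcase1, hcase2⟩ := quadClass f0 ψ hψ hs1 h2F hmulξη haddξη
    have hsq_flip : IsSquare ((s : F) ^ 2 - 1) ↔ IsSquare (1 - s ^ 2) := by
      obtain ⟨c, hc⟩ := hm1
      constructor
      · rintro ⟨t, ht⟩
        exact ⟨c * t, by linear_combination -ht + (t * t) * hc⟩
      · rintro ⟨t, ht⟩
        exact ⟨c * t, by linear_combination -ht + (t * t) * hc⟩
    have hzq_decomp : z ^ q = (z ^ q * w) * z := by
      rw [mul_assoc, mul_comm w z, hzw, mul_one]
    by_cases hSq : IsSquare (1 - s ^ 2)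
    · simp only [hSq, not_true, iff_false]
      intro hfix
      obtain ⟨x0, hx0, hx00, hx01, hx0q⟩ := hcase2 (hsq_flip.mpr hSq)
      have hzqxi : z ^ q = f0 x0 * z := by rw [hzq_decomp, hx0]
      have hz2 : (z ^ q) ^ q = f0 (x0 * x0) * z := by
        rw [hzqxi, mul_pow, hf0fix, hzqxi, ← mul_assoc, ← map_mul]
      have hwcase : ∀ c : F, f0 c * z = w → False := by
        intro c hc
        have hc0 : f0 c ≠ 0 := by
          intro h
          rw [h, zero_mul] at hc
          exact right_ne_zero_of_mul_eq_one hzw hc.symm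
        have hcF : c ≠ 0 := by
          intro h
          rw [h, map_zero] at hc0
          exact hc0 rfl
        have hzz : f0 c * (z * z) = 1 := by
          rw [← mul_assoc, hc, mul_comm w z, hzw]
        have hZZ : z * z = f0 c⁻¹ := by
          rw [map_inv₀]
          exact (inv_eq_of_mul_eq_one_right hzz).symm
        have hWW : w * w = f0 c := by
          calc w * w = f0 c * (f0 c * (z * z)) := by rw [← hc]; ring
            _ = f0 c := by rw [hzz, mul_one]
        exact tail_range hSq ⟨c⁻¹ + c, by rw [map_add, hZZ, hWW]⟩
      rcases opts hfix with h | h | h | h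
      · rw [hz2] at h
        have h1 : f0 (x0 * x0) = 1 :=
          mul_right_cancel₀ hzne (h.trans (one_mul z).symm)
        apply hx01
        have h2 : x0 * x0 = 1 := f0.injective (by rw [h1, map_one])
        linear_combination h2
      · rw [hz2] at h
        have h1 : f0 (x0 * x0) = -1 := by
          have := mul_right_cancel₀ hzne (h.trans (neg_one_mul z).symm)
          exact this
        have h2 : x0 * x0 = -1 := f0.injective (by rw [h1, map_neg, map_one])
        have h3 : (2 : F) * (s * x0) = 0 := by linear_combination h2 - hx0q
        rcases mul_eq_zero.mp h3 with h4 | h4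
        · exact h2F h4
        · rcases mul_eq_zero.mp h4 with h5 | h5
          · exact hs0 h5
          · exact hx00 h5
      · rw [hz2] at h
        exact hwcase (x0 * x0) h
      · rw [hz2] at h
        refine hwcase (-(x0 * x0)) ?_
        rw [map_neg, neg_mul, h, neg_neg]
    · simp only [hSq, not_false_iff, iff_true]
      have hns : ¬IsSquare ((s : F) ^ 2 - 1) := fun hh => hSq (hsq_flip.mp hh)
      have hψξ := hcase1 hns
      have hz2 : (z ^ q) ^ q = z := by
        calc (z ^ q) ^ q = ψ (z ^ q) := (hψ _).symm
          _ = ψ ((z ^ q * w) * z) := by rw [← hzq_decomp]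
          _ = ψ (z ^ q * w) * ψ z := map_mul ψ _ _
          _ = (w ^ q * z) * z ^ q := by rw [hψξ, hψ]
          _ = (z * w) ^ q * z := by rw [mul_pow]; ring
          _ = z := by rw [hzw, one_pow, one_mul]
      exact tail_fix hz2
  · -- -1 is not a square in F
    have hε : (-1 : F) ^ m = -1 := by
      have h := euler_nonsq hodd' (by norm_num : (-1 : F) ≠ 0) hm1
      rwa [hm2] at h
    have hiqm : i0 ^ q = -i0 := by
      rw [hiq, hε, map_neg, map_one, neg_one_mul]
    have hzq : z ^ q = a ^ q - i0 * b ^ q := by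
      rw [hzdef, hψadd, mul_pow, hiqm]
      ring
    have hwq : w ^ q = a ^ q + i0 * b ^ q := by
      rw [hwdef, hψsub, mul_pow, hiqm]
      ring
    have hmulξη : (z ^ q * z) * (w ^ q * w) = 1 := by
      have h1 : (z ^ q * z) * (w ^ q * w) = (z * w) ^ q * (z * w) := by
        rw [mul_pow]; ring
      rw [h1, hzw, one_pow, one_mul]
    have haddξη : (z ^ q * z) + (w ^ q * w) = 2 * f0 s := by
      rw [hzq, hwq, hzdef, hwdef]
      linear_combination 2 * hAB - 2 * (b ^ q * b) * hii
    obtain ⟨hcase1, hcase2⟩ := quadClass f0 ψ hψ hs1 h2F hmulξη haddξη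
    have hsq_flip : IsSquare ((s : F) ^ 2 - 1) ↔ ¬IsSquare (1 - s ^ 2) := by
      constructor
      · rintro ⟨t, ht⟩ hcon
        obtain ⟨d, hd⟩ := hcon
        have hd0 : d ≠ 0 := by
          rintro rfl
          rw [mul_zero] at hd
          exact hs1ne hd
        apply hm1
        refine ⟨t / d, ?_⟩
        field_simp
        linear_combination ht + hd
      · intro hcon
        rw [FiniteField.isSquare_iff hcharF hs21ne]
        have h1 : (1 - s ^ 2 : F) ^ (q / 2) = -1 := euler_nonsq hodd' hs1ne hcon
        rw [show (s ^ 2 - 1 : F) = -1 * (1 - s ^ 2) by ring, mul_pow, h1, hm2, hε]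
        norm_num
    have hzq_decomp : z ^ q = (z ^ q * z) * w := by
      rw [mul_assoc, hzw, mul_one]
    have hwq_decomp : w ^ q = (w ^ q * w) * z := by
      rw [mul_assoc, mul_comm w z, hzw, mul_one]
    by_cases hSq : IsSquare (1 - s ^ 2)
    · simp only [hSq, not_true, iff_false]
      intro hfix
      have hns : ¬IsSquare ((s : F) ^ 2 - 1) := fun hh => (hsq_flip.mp hh) hSq
      have hψξ := hcase1 hns
      have hquadη : (w ^ q * w) ^ 2 - 2 * f0 s * (w ^ q * w) + 1 = 0 := by
        have h : (w ^ q * w) ^ 2 - ((z ^ q * z) + (w ^ q * w)) * (w ^ q * w)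
            + (z ^ q * z) * (w ^ q * w) = 0 := by ring
        rw [haddξη, hmulξη] at h
        linear_combination h
      have hηne : w ^ q * w ≠ 0 := right_ne_zero_of_mul_eq_one hmulξη
      have hz2 : (z ^ q) ^ q = (w ^ q * w) * ((w ^ q * w) * z) := by
        calc (z ^ q) ^ q = ψ (z ^ q) := (hψ _).symm
          _ = ψ ((z ^ q * z) * w) := by rw [← hzq_decomp]
          _ = ψ (z ^ q * z) * ψ w := map_mul ψ _ _
          _ = (w ^ q * w) * w ^ q := by rw [hψξ, hψ]
          _ = (w ^ q * w) * ((w ^ q * w) * z) := by rw [← hwq_decomp]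
      have hf0s0 : f0 s ≠ 0 := by
        intro h
        exact hs0 (f0.injective (by rw [h, map_zero]))
      have hη2sum : (z ^ q * z) * (z ^ q * z) + (w ^ q * w) * (w ^ q * w)
          = f0 (4 * s ^ 2 - 2) := by
        have hmap : f0 (4 * s ^ 2 - 2) = 4 * f0 s ^ 2 - 2 := by
          rw [map_sub, map_mul, map_ofNat, map_pow, map_ofNat]
        rw [hmap]
        linear_combination ((z ^ q * z) + (w ^ q * w) + 2 * f0 s) * haddξη - 2 * hmulξη
      have hwcase : ∀ e : L, (e = 1 ∨ e = -1) →
          (w ^ q * w) * ((w ^ q * w) * z) = e * w → False := by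
        intro e he h
        have h1 : ((w ^ q * w) * (w ^ q * w)) * (z * z) = e := by
          calc ((w ^ q * w) * (w ^ q * w)) * (z * z)
              = ((w ^ q * w) * ((w ^ q * w) * z)) * z := by ring
            _ = e * w * z := by rw [h]
            _ = e * (z * w) := by ring
            _ = e := by rw [hzw, mul_one]
        have h2 : (z * z) * (w * w) = 1 := by
          calc (z * z) * (w * w) = (z * w) * (z * w) := by ring
            _ = 1 := by rw [hzw, mul_one]
        have h4 : (w ^ q * w) * (w ^ q * w) = e * (w * w) := by
          calc (w ^ q * w) * (w ^ q * w)
              = ((w ^ q * w) * (w ^ q * w)) * ((z * z) * (w * w)) := by rw [h2, mul_one]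
            _ = (((w ^ q * w) * (w ^ q * w)) * (z * z)) * (w * w) := by ring
            _ = e * (w * w) := by rw [h1]
        have hWW : w * w = e * ((w ^ q * w) * (w ^ q * w)) := by
          rw [h4]
          rcases he with rfl | rfl <;> ring
        have h5 : ((z ^ q * z) * (z ^ q * z)) * ((w ^ q * w) * (w ^ q * w)) = 1 := by
          calc ((z ^ q * z) * (z ^ q * z)) * ((w ^ q * w) * (w ^ q * w))
              = ((z ^ q * z) * (w ^ q * w)) * ((z ^ q * z) * (w ^ q * w)) := by ring
            _ = 1 := by rw [hmulξη, mul_one]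
        have hZZ : z * z = e * ((z ^ q * z) * (z ^ q * z)) := by
          calc z * z = (((z ^ q * z) * (z ^ q * z)) * ((w ^ q * w) * (w ^ q * w))) * (z * z) := by
                rw [h5, one_mul]
            _ = ((z ^ q * z) * (z ^ q * z)) * (((w ^ q * w) * (w ^ q * w)) * (z * z)) := by ring
            _ = ((z ^ q * z) * (z ^ q * z)) * e := by rw [h1]
            _ = e * ((z ^ q * z) * (z ^ q * z)) := by ring
        rcases he with rfl | rfl
        · refine tail_range hSq ⟨4 * s ^ 2 - 2, ?_⟩
          rw [hZZ, hWW, one_mul, one_mul, hη2sum]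
        · refine tail_range hSq ⟨-(4 * s ^ 2 - 2), ?_⟩
          rw [hZZ, hWW, map_neg, ← hη2sum]
          ring
      rcases opts hfix with h | h | h | h
      · -- (z^q)^q = z forces s^2 = 1
        have hη1 : (w ^ q * w) * (w ^ q * w) = 1 := by
          have h1 : ((w ^ q * w) * (w ^ q * w)) * z = 1 * z := by
            rw [one_mul]
            calc ((w ^ q * w) * (w ^ q * w)) * z
                = (w ^ q * w) * ((w ^ q * w) * z) := by ring
              _ = z := by rw [← hz2, h]
          exact mul_right_cancel₀ hzne h1
        have h8 : (2 : L) * (f0 s * (w ^ q * w) - 1) = 0 := by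
          linear_combination -hquadη + hη1
        have h7 : f0 s * (w ^ q * w) = 1 := by
          rcases mul_eq_zero.mp h8 with h9 | h9
          · exact absurd h9 h2L
          · linear_combination h9
        have h10 : f0 (s ^ 2) = 1 := by
          calc f0 (s ^ 2) = f0 s ^ 2 * ((w ^ q * w) * (w ^ q * w)) := by
                rw [map_pow, hη1, mul_one]
            _ = (f0 s * (w ^ q * w)) ^ 2 := by ring
            _ = 1 := by rw [h7, one_pow]
        exact hs1 (f0.injective (by rw [h10, map_one]))
      · -- (z^q)^q = -z forces s = 0
        have hη1 : (w ^ q * w) * (w ^ q * w) = -1 := by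
          have h1 : ((w ^ q * w) * (w ^ q * w)) * z = -1 * z := by
            rw [neg_one_mul]
            calc ((w ^ q * w) * (w ^ q * w)) * z
                = (w ^ q * w) * ((w ^ q * w) * z) := by ring
              _ = -z := by rw [← hz2, h]
          exact mul_right_cancel₀ hzne h1
        have h8 : (2 : L) * (f0 s * (w ^ q * w)) = 0 := by
          linear_combination -hquadη + hη1
        rcases mul_eq_zero.mp h8 with h9 | h9
        · exact h2L h9
        · rcases mul_eq_zero.mp h9 with h10 | h10
          · exact hf0s0 h10
          · exact hηne h10
      · exact hwcase 1 (Or.inl rfl) (by rw [one_mul, ← hz2, h])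
      · exact hwcase (-1) (Or.inr rfl) (by rw [neg_one_mul, ← hz2, h])
    · simp only [hSq, not_false_iff, iff_true]
      obtain ⟨x0, hx0, _, _, _⟩ := hcase2 (hsq_flip.mpr hSq)
      have hz2 : (z ^ q) ^ q = z := by
        calc (z ^ q) ^ q = ψ (z ^ q) := (hψ _).symm
          _ = ψ ((z ^ q * z) * w) := by rw [← hzq_decomp]
          _ = ψ (z ^ q * z) * ψ w := map_mul ψ _ _
          _ = (z ^ q * z) * w ^ q := by rw [hx0, hψ, hψ, hf0fix]
          _ = (z ^ q * z) * ((w ^ q * w) * z) := by rw [← hwq_decomp]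
          _ = ((z ^ q * z) * (w ^ q * w)) * z := by ring
          _ = z := by rw [hmulξη, one_mul]
      exact tail_fix hz2

private lemma core {F E : Type*} [Field F] [Fintype F] [Field E] [Fintype E] [Algebra F E]
    (hodd : Odd (Fintype.card F)) {n : ℕ} (h2n : 2 * n = Fintype.card F + 1)
    {s : F} (hs0 : s ≠ 0) (hs1 : s ^ 2 ≠ 1)
    {y : E} (hy : y ^ n + (1 - y) ^ n = algebraMap F E s) :
    y ^ Fintype.card F ^ 2 = y ↔ ¬IsSquare (1 - s ^ 2) := by
  classical
  set p := ringChar F with hpdef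
  haveI : CharP F p := ringChar.charP F
  obtain ⟨k, hpp, hcard⟩ := FiniteField.card F p
  haveI hCE : CharP E p := charP_of_injective_algebraMap (algebraMap F E).injective p
  have hk0 : (k : ℕ) ≠ 0 := k.2.ne'
  have hp2 : p ≠ 2 := by
    intro h
    rw [h] at hcard
    obtain ⟨m, hm⟩ := hodd
    have h2 : 2 ∣ Fintype.card F := hcard ▸ dvd_pow_self 2 hk0
    omega
  have hoddE : Odd (Fintype.card E) := by
    obtain ⟨kE, hppE, hcardE⟩ := FiniteField.card E p
    rw [hcardE]
    exact (hpp.odd_of_ne_two hp2).pow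
  have hcharE : ringChar E ≠ 2 := by
    rw [ringChar.eq E p]
    exact hp2
  obtain ⟨v, hv⟩ := FiniteField.exists_nonsquare (F := E) hcharE
  have hv2 : ∀ b : E, b ^ 2 ≠ v := by
    intro b hb
    exact hv ⟨b, by rw [← hb, pow_two]⟩
  have hirr : Irreducible (X ^ 2 - C v : E[X]) :=
    X_pow_sub_C_irreducible_of_prime Nat.prime_two hv2
  haveI : Fact (Irreducible (X ^ 2 - C v : E[X])) := ⟨hirr⟩
  haveI : CharP (AdjoinRoot (X ^ 2 - C v : E[X])) p :=
    charP_of_injective_algebraMap (algebraMap E (AdjoinRoot (X ^ 2 - C v : E[X]))).injective p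
  haveI : ExpChar (AdjoinRoot (X ^ 2 - C v : E[X])) p := ExpChar.prime hpp
  have hψ : ∀ x : AdjoinRoot (X ^ 2 - C v : E[X]),
      iterateFrobenius (AdjoinRoot (X ^ 2 - C v : E[X])) p (k : ℕ) x = x ^ Fintype.card F := by
    intro x
    rw [iterateFrobenius_def]
    congr 1
    exact hcard.symm
  have hr : (AdjoinRoot.root (X ^ 2 - C v : E[X])) * (AdjoinRoot.root (X ^ 2 - C v : E[X]))
      = algebraMap E (AdjoinRoot (X ^ 2 - C v : E[X])) v := by
    have h := AdjoinRoot.eval₂_root (X ^ 2 - C v : E[X])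
    rw [eval₂_sub, eval₂_pow, eval₂_X, eval₂_C, sub_eq_zero] at h
    rw [AdjoinRoot.algebraMap_eq, ← h]
    exact (pow_two _).symm
  exact core2 hodd hoddE h2n hs0 hs1 _ hψ hv hr hy

private lemma bridge {F : Type*} [Field F] [Fintype F] (hodd : Odd (Fintype.card F)) {n : ℕ}
    (h2n : 2 * n = Fintype.card F + 1) {s : F} (hs0 : s ≠ 0) (hs1 : s ^ 2 ≠ 1)
    {h : F[X]} (hirr : Irreducible h) (hdvd : h ∣ (X ^ n + (1 - X) ^ n - C s)) :
    2 < h.natDegree ↔ IsSquare (1 - s ^ 2) := by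
  classical
  haveI := Fact.mk hirr
  have hh0 : h ≠ 0 := hirr.ne_zero
  haveI : Module.Finite F (AdjoinRoot h) :=
    Module.Finite.of_basis (AdjoinRoot.powerBasis hh0).basis
  haveI : Finite (AdjoinRoot h) := Module.finite_of_finite F
  letI : Fintype (AdjoinRoot h) := Fintype.ofFinite _
  have hq2 : 1 < Fintype.card F := Fintype.one_lt_card
  have hcardE : Fintype.card (AdjoinRoot h) = Fintype.card F ^ h.natDegree := by
    rw [Module.card_eq_pow_finrank (K := F) (V := AdjoinRoot h), (AdjoinRoot.powerBasis hh0).finrank]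
    rfl
  have hy : (AdjoinRoot.root h) ^ n + (1 - AdjoinRoot.root h) ^ n
      = algebraMap F (AdjoinRoot h) s := by
    have h0 : aeval (AdjoinRoot.root h) (X ^ n + (1 - X) ^ n - C s) = 0 := by
      rw [AdjoinRoot.aeval_eq, AdjoinRoot.mk_eq_zero]
      exact hdvd
    rw [map_sub, map_add, map_pow, map_pow, map_sub, aeval_X, aeval_C, map_one,
      sub_eq_zero] at h0
    exact h0
  have hiff := core hodd h2n hs0 hs1 hy
  constructor
  · intro hdeg
    by_contra hns
    have hfix := hiff.mpr hns
    -- build the F-algebra endomorphism x ↦ x ^ (card F)^2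
    set p := ringChar F with hpdef
    haveI : CharP F p := ringChar.charP F
    obtain ⟨k, hpp, hcard⟩ := FiniteField.card F p
    haveI : CharP (AdjoinRoot h) p :=
      charP_of_injective_algebraMap (algebraMap F (AdjoinRoot h)).injective p
    haveI : ExpChar (AdjoinRoot h) p := ExpChar.prime hpp
    have hΨ : ∀ x : AdjoinRoot h,
        iterateFrobenius (AdjoinRoot h) p (2 * (k : ℕ)) x = x ^ Fintype.card F ^ 2 := by
      intro x
      rw [iterateFrobenius_def]
      congr 1
      rw [hcard, ← pow_mul, mul_comm (k : ℕ) 2, pow_mul]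
    have hcomm : ∀ c : F,
        iterateFrobenius (AdjoinRoot h) p (2 * (k : ℕ)) (algebraMap F (AdjoinRoot h) c)
          = algebraMap F (AdjoinRoot h) c := by
      intro c
      rw [hΨ, ← map_pow]
      congr 1
      calc c ^ Fintype.card F ^ 2 = (c ^ Fintype.card F) ^ Fintype.card F := by
            rw [pow_two, pow_mul]
        _ = c := by rw [FiniteField.pow_card, FiniteField.pow_card]
    set Ψ : AdjoinRoot h →ₐ[F] AdjoinRoot h :=
      AlgHom.mk' (iterateFrobenius (AdjoinRoot h) p (2 * (k : ℕ)))
        (fun c x => by rw [Algebra.smul_def, map_mul, hcomm, Algebra.smul_def]) with hΨdef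
    have hfixroot : Ψ (AdjoinRoot.root h) = AdjoinRoot.root h := by
      show iterateFrobenius (AdjoinRoot h) p (2 * (k : ℕ)) (AdjoinRoot.root h) = _
      rw [hΨ, hfix]
    have hall : ∀ x : AdjoinRoot h, x ^ Fintype.card F ^ 2 = x := by
      intro x
      obtain ⟨P, rfl⟩ := AdjoinRoot.mk_surjective x
      have h1 : Ψ (AdjoinRoot.mk h P) = AdjoinRoot.mk h P := by
        rw [← AdjoinRoot.aeval_eq, ← aeval_algHom_apply, hfixroot]
      have h2 : Ψ (AdjoinRoot.mk h P)
          = (AdjoinRoot.mk h P) ^ Fintype.card F ^ 2 := hΨ _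
      rw [← h2, h1]
    have hle := card_le_of_all_fixed (by nlinarith : 1 < Fintype.card F ^ 2) hall
    rw [hcardE] at hle
    have hlt : Fintype.card F ^ 2 < Fintype.card F ^ h.natDegree :=
      Nat.pow_lt_pow_right hq2 hdeg
    omega
  · intro hsq
    by_contra hdeg
    push_neg at hdeg
    have hd1 : 0 < h.natDegree := hirr.natDegree_pos
    have hfix : (AdjoinRoot.root h) ^ Fintype.card F ^ 2 = AdjoinRoot.root h := by
      rcases (by omega : h.natDegree = 1 ∨ h.natDegree = 2) with hd | hd
      · have h1 : (AdjoinRoot.root h) ^ Fintype.card F = AdjoinRoot.root h := by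
          have h2 := FiniteField.pow_card (AdjoinRoot.root h)
          rwa [hcardE, hd, pow_one] at h2
        rw [pow_two, pow_mul, h1, h1]
      · have h2 := FiniteField.pow_card (AdjoinRoot.root h)
        rwa [hcardE, hd] at h2
    exact (hiff.mp hfix) hsq

theorem stmt7 (F : Type*) [Field F] [Fintype F] (hodd : Odd (Fintype.card F))
    (n : ℕ) (hn : n = (Fintype.card F + 1) / 2)
    (s : F) (hs0 : s ≠ 0) (hs1 : s ≠ 1) (hs2 : s ≠ -1) :
    (∃ h : F[X], Irreducible h ∧ h ∣ (X ^ n + (1 - X) ^ n - C s) ∧ 2 < h.natDegree) ↔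
      (IsSquare (1 - s ^ 2) ∧ 1 - s ^ 2 ≠ 0) := by
  classical
  have h2n : 2 * n = Fintype.card F + 1 := by
    obtain ⟨m, hm⟩ := hodd
    omega
  have hs1' : s ^ 2 ≠ 1 := by
    intro h
    have h1 : (s - 1) * (s + 1) = 0 := by linear_combination h
    rcases mul_eq_zero.mp h1 with h2 | h2
    · exact hs1 (by linear_combination h2)
    · exact hs2 (by linear_combination h2)
  have hne : (1 : F) - s ^ 2 ≠ 0 := by
    intro h
    exact hs1' (by linear_combination -h)
  constructor
  · rintro ⟨h, hirr, hdvd, hdeg⟩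
    exact ⟨(bridge hodd h2n hs0 hs1' hirr hdvd).mp hdeg, hne⟩
  · rintro ⟨hsq, -⟩
    have hq3 : 3 ≤ Fintype.card F := by
      have := Fintype.one_lt_card (α := F)
      obtain ⟨m, hm⟩ := hodd
      omega
    have hn2 : 2 ≤ n := by omega
    -- the polynomial is not zero and not a unit, via its degree-1 coefficient
    have hco : (X ^ n + (1 - X) ^ n - C s : F[X]).coeff 1 = -(n : F) := by
      rw [coeff_sub, coeff_add, coeff_X_pow, if_neg (by omega : ¬(1 = n)),
        coeff_C, if_neg one_ne_zero]
      have h1 : ((1 : F[X]) - X) = -(X + C (-1)) := by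
        rw [map_neg, C_1]
        ring
      rw [h1, neg_pow, ← C_1, ← C_neg, ← C_pow, coeff_C_mul, coeff_X_add_C_pow,
        Nat.choose_one_right]
      have h2 : ((-1 : F) ^ n) * ((-1 : F) ^ (n - 1) * (n : F)) = -(n : F) := by
        rw [← mul_assoc, ← pow_add]
        have h3 : (-1 : F) ^ (n + (n - 1)) = -1 := Odd.neg_one_pow ⟨n - 1, by omega⟩
        rw [h3]
        ring
      rw [h2]
      ring
    set p := ringChar F with hpdef
    haveI : CharP F p := ringChar.charP F
    obtain ⟨k, hpp, hcard⟩ := FiniteField.card F p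
    have hk0 : (k : ℕ) ≠ 0 := k.2.ne'
    have hnF : (n : F) ≠ 0 := by
      intro hzero
      have hdvdn : p ∣ n := (CharP.cast_eq_zero_iff F p n).mp hzero
      have hdvdq : p ∣ Fintype.card F := hcard ▸ dvd_pow_self p hk0
      have hdvd1 : p ∣ 1 := by
        have h1 : p ∣ Fintype.card F + 1 := by
          rw [← h2n]
          exact hdvdn.mul_left 2
        have h3 := Nat.dvd_sub h1 hdvdq
        rwa [show Fintype.card F + 1 - Fintype.card F = 1 by omega] at h3
      exact hpp.one_lt.ne' (Nat.dvd_one.mp hdvd1)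
    have hcone : (X ^ n + (1 - X) ^ n - C s : F[X]).coeff 1 ≠ 0 := by
      rw [hco]
      exact neg_ne_zero.mpr hnF
    have hg0 : (X ^ n + (1 - X) ^ n - C s : F[X]) ≠ 0 := by
      intro h
      rw [h, coeff_zero] at hcone
      exact hcone rfl
    have hgu : ¬IsUnit (X ^ n + (1 - X) ^ n - C s : F[X]) := by
      intro h
      have h1 : (X ^ n + (1 - X) ^ n - C s : F[X]).natDegree = 0 :=
        natDegree_eq_zero_iff_degree_le_zero.mpr (le_of_eq (isUnit_iff_degree_eq_zero.mp h))
      have h2 := coeff_eq_zero_of_natDegree_lt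
        (show (X ^ n + (1 - X) ^ n - C s : F[X]).natDegree < 1 by omega)
      exact hcone h2
    obtain ⟨h, hirr, hdvd⟩ := WfDvdMonoid.exists_irreducible_factor hgu hg0
    exact ⟨h, hirr, hdvd, (bridge hodd h2n hs0 hs1' hirr hdvd).mpr hsq⟩
end

section
/- Let q be an odd prime power, c ∈ F_q, and define c_0=0, c_1=c, c_{k+1}=(2-4c)c_k - c_{k-1} + 2c. Then for every k ≥ 1, c_{k+1}·c_{k-1} = (c - c_k)^2. -/
theorem stmt9 (F : Type*) [Field F] [Fintype F] (hodd : Odd (Fintype.card F))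
    (c : F) (seq : ℕ → F) (h0 : seq 0 = 0) (h1 : seq 1 = c)
    (hrec : ∀ k, seq (k + 2) = (2 - 4 * c) * seq (k + 1) - seq k + 2 * c) :
    ∀ k : ℕ, 1 ≤ k → seq (k + 1) * seq (k - 1) = (c - seq k) ^ 2 := by
  intro k hk
  induction k, hk using Nat.le_induction with
  | base => simp only [show (1:ℕ) + 1 = 2 from rfl, Nat.sub_self, h0, h1, mul_zero]; ring
  | succ n hn ih =>
    obtain ⟨m, rfl⟩ : ∃ m, n = m + 1 := ⟨n - 1, (Nat.succ_pred_eq_of_pos hn).symm⟩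
    simp only [Nat.add_sub_cancel] at ih ⊢
    simp only [show m + 1 + 1 = m + 2 from rfl] at ih ⊢
    rw [show m + 1 + 2 = m + 3 from rfl, hrec (m + 1), show m + 1 + 1 = m + 2 from rfl]
    linear_combination ih - seq (m + 2) * hrec m
end

section
/- Let q be an odd prime power, c ∈ F_q with c and 1-c both nonzero squares. Let β = √(1-c)+i√c (with i^2=-1) chosen of even order 2e in the multiplicative group, and c_k = -(β^k - β^{-k})^2/4. If 0 ≤ j < k ≤ e/2, then c_j ≠ c_k. -/
theorem stmt10 (F : Type*) [Field F] [Fintype F] (hodd : Odd (Fintype.card F))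
    (c : F) (hc : IsSquare c) (hc0 : c ≠ 0) (h1c : IsSquare (1 - c)) (h1c0 : 1 - c ≠ 0)
    (i sc s1c β : AlgebraicClosure F) (hi : i ^ 2 = -1)
    (hsc : sc ^ 2 = algebraMap F (AlgebraicClosure F) c)
    (hs1c : s1c ^ 2 = algebraMap F (AlgebraicClosure F) (1 - c))
    (hβ : β = s1c + i * sc)
    (e : ℕ) (hord : orderOf β = 2 * e)
    (j k : ℕ) (hjk : j < k) (hk : 2 * k ≤ e) :
    -(β ^ j - β⁻¹ ^ j) ^ 2 / 4 ≠ -(β ^ k - β⁻¹ ^ k) ^ 2 / 4 := by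
  intro heq
  -- characteristic is odd
  have hchar : ringChar F ≠ 2 := by
    intro h
    have h1 := FiniteField.even_card_of_char_two h
    have h2 := Nat.odd_iff.mp hodd
    omega
  have h2F : (2 : F) ≠ 0 := Ring.two_ne_zero hchar
  have h2K : (2 : AlgebraicClosure F) ≠ 0 := by
    have : algebraMap F (AlgebraicClosure F) 2 = (2 : AlgebraicClosure F) := map_ofNat _ 2
    rw [← this]
    exact (map_ne_zero (algebraMap F (AlgebraicClosure F))).mpr h2F
  have h4 : (4 : AlgebraicClosure F) ≠ 0 := by
    have : (4 : AlgebraicClosure F) = 2 * 2 := by norm_num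
    rw [this]
    exact mul_ne_zero h2K h2K
  -- basic positivity facts
  have hk1 : 0 < k := lt_of_le_of_lt (Nat.zero_le j) hjk
  have he2 : 2 ≤ e := le_trans (by omega) hk
  -- β ≠ 0
  have hβ0 : β ≠ 0 := by
    intro h
    have hp := pow_orderOf_eq_one β
    rw [hord, h, zero_pow (by omega)] at hp
    exact zero_ne_one hp
  -- clear the -/4
  rw [div_eq_div_iff h4 h4, neg_mul, neg_mul, neg_inj] at heq
  have hsq := mul_right_cancel₀ h4 heq
  set a := β ^ j with ha'
  set b := β ^ k with hb'
  have ha : a ≠ 0 := pow_ne_zero _ hβ0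
  have hb : b ≠ 0 := pow_ne_zero _ hβ0
  have hia : a * a⁻¹ = 1 := mul_inv_cancel₀ ha
  have hib : b * b⁻¹ = 1 := mul_inv_cancel₀ hb
  rw [inv_pow, inv_pow, ← ha', ← hb'] at hsq
  -- order divides helper
  have hdvd : ∀ m : ℕ, β ^ m = 1 → 2 * e ∣ m := fun m hm => by
    rw [← hord]; exact orderOf_dvd_of_pow_eq_one hm
  have hfac : (a - a⁻¹ - (b - b⁻¹)) * (a - a⁻¹ + (b - b⁻¹)) = 0 := by
    linear_combination hsq
  rcases mul_eq_zero.mp hfac with h | h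
  · -- a - a⁻¹ = b - b⁻¹ : factor (a-b)(ab+1) = 0
    have hfac2 : (a - b) * (a * b + 1) = 0 := by
      linear_combination a * b * h + b * hia - a * hib
    rcases mul_eq_zero.mp hfac2 with h' | h'
    · -- β^j = β^k
      have hab : b = a := (sub_eq_zero.mp h').symm
      have hpow : β ^ j * β ^ (k - j) = β ^ j * 1 := by
        rw [mul_one, ← pow_add, show j + (k - j) = k from by omega, ← hb', ← ha', hab]
      have h1 : β ^ (k - j) = 1 := mul_left_cancel₀ (pow_ne_zero j hβ0) hpow
      have := Nat.le_of_dvd (by omega) (hdvd _ h1)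
      omega
    · -- β^(j+k) = -1
      have hm1 : β ^ (j + k) = -1 := by
        rw [pow_add, ← ha', ← hb']
        linear_combination h'
      have h1 : β ^ (2 * (j + k)) = 1 := by
        rw [mul_comm, pow_mul, hm1]
        ring
      have hem : e ∣ j + k :=
        (Nat.mul_dvd_mul_iff_left (by norm_num : 0 < 2)).mp (hdvd _ h1)
      have := Nat.le_of_dvd (by omega) hem
      omega
  · -- a - a⁻¹ = -(b - b⁻¹) : factor (a+b)(ab-1) = 0
    have hfac2 : (a + b) * (a * b - 1) = 0 := by
      linear_combination a * b * h + b * hia + a * hib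
    rcases mul_eq_zero.mp hfac2 with h' | h'
    · -- a = -b, so a^2 = b^2, β^(2(k-j)) = 1 via e ∣ k-j
      have hab : a ^ 2 = b ^ 2 := by
        have : a = -b := eq_neg_of_add_eq_zero_left h'
        rw [this]; ring
      have hpow : β ^ (2 * j) * β ^ (2 * (k - j)) = β ^ (2 * j) * 1 := by
        rw [mul_one, ← pow_add, ha', hb', ← pow_mul, ← pow_mul] at *
        rw [show 2 * j + 2 * (k - j) = k * 2 by omega, show (2:ℕ) * j = j * 2 by ring]
        exact hab.symm
      have h1 : β ^ (2 * (k - j)) = 1 := mul_left_cancel₀ (pow_ne_zero _ hβ0) hpow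
      have hem : e ∣ k - j :=
        (Nat.mul_dvd_mul_iff_left (by norm_num : 0 < 2)).mp (hdvd _ h1)
      have := Nat.le_of_dvd (by omega) hem
      omega
    · -- β^(j+k) = 1
      have h1 : β ^ (j + k) = 1 := by
        rw [pow_add, ← ha', ← hb']
        linear_combination h'
      have := Nat.le_of_dvd (by omega) (hdvd _ h1)
      omega
end

section
/- Let q be an odd prime power, n=(q+1)/2, s ∈ F_q, c = 1-s^2, and x a root of g_s(y)=y^n+(1-y)^n-s in an algebraic closure. Then x^q = c + x - 2cx + 2v·√(c-c^2)·√(x-x^2) for some v ∈ {1,-1}, where √(x-x^2) := (x^n - sx)/√c and √(c-c^2) := √c·√(1-c) for any fixed square roots √c, √(1-c) of c, 1-c (assumed to exist in F_q, with c ≠ 0). -/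
/-!
Since `q + 1 = 2n`, we have `x ^ q * x = (x ^ n) ^ 2` and, as `y ↦ y ^ q` is additive,
`(1 - x ^ q) * (1 - x) = ((1 - x) ^ n) ^ 2 = (s - x ^ n) ^ 2`. Subtracting the two identities
gives `x ^ q = 1 - x - s ^ 2 + 2 s x ^ n`, linear in `x ^ n`. Because `√(1 - c) ^ 2 = s ^ 2`, one
of `±√(1 - c)` equals `s`, and with that sign `v` the right-hand side of the claim is exactly this.
-/

theorem pow_eq_of_pow_add_one_sub_pow_eq {R : Type*} [CommRing R] {q n : ℕ} (hqn : q + 1 = 2 * n)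
    {x s : R} (hfrob : (1 - x) ^ q = 1 - x ^ q) (hx : x ^ n + (1 - x) ^ n = s) :
    x ^ q = 1 - x - s ^ 2 + 2 * s * x ^ n := by
  have hsq : ∀ y : R, y ^ q * y = (y ^ n) ^ 2 := fun y => by
    rw [← pow_succ, ← pow_mul, hqn, mul_comm]
  linear_combination hsq x - hsq (1 - x) + (1 - x) * hfrob
    + (x ^ n - (1 - x) ^ n - s) * hx

theorem FiniteField.pow_card_eq_of_pow_add_one_sub_pow_eq {F L : Type*} [Field F] [Fintype F]
    [CommRing L] [Algebra F L] (hodd : Odd (Fintype.card F)) {x s : L}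
    (hx : x ^ ((Fintype.card F + 1) / 2) + (1 - x) ^ ((Fintype.card F + 1) / 2) = s) :
    x ^ Fintype.card F = 1 - x - s ^ 2 + 2 * s * x ^ ((Fintype.card F + 1) / 2) := by
  refine pow_eq_of_pow_add_one_sub_pow_eq (by obtain ⟨m, hm⟩ := hodd; omega) ?_ hx
  simpa using (frobeniusAlgHom F L).map_sub 1 x

theorem exists_eq_one_or_eq_neg_one_mul_eq_of_sq_eq {R : Type*} [CommRing R] [NoZeroDivisors R]
    {a b : R} (h : a ^ 2 = b ^ 2) : ∃ v : R, (v = 1 ∨ v = -1) ∧ v * a = b := by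
  rcases sq_eq_sq_iff_eq_or_eq_neg.1 h with rfl | rfl
  · exact ⟨1, Or.inl rfl, one_mul a⟩
  · exact ⟨-1, Or.inr rfl, by ring⟩

theorem stmt13 (F : Type*) [Field F] [Fintype F] (hodd : Odd (Fintype.card F))
    (n : ℕ) (hn : n = (Fintype.card F + 1) / 2)
    (s c : F) (hc : c = 1 - s ^ 2) (hc0 : c ≠ 0)
    (sc s1c : F) (hsc : sc ^ 2 = c) (hs1c : s1c ^ 2 = 1 - c)
    (x : AlgebraicClosure F)
    (hx : x ^ n + (1 - x) ^ n = algebraMap F (AlgebraicClosure F) s) :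
    ∃ v : F, (v = 1 ∨ v = -1) ∧
      x ^ Fintype.card F =
        algebraMap F (AlgebraicClosure F) c + x - 2 * algebraMap F (AlgebraicClosure F) c * x
          + 2 * algebraMap F (AlgebraicClosure F) v
            * algebraMap F (AlgebraicClosure F) (sc * s1c)
            * ((x ^ n - algebraMap F (AlgebraicClosure F) s * x)
                / algebraMap F (AlgebraicClosure F) sc) := by
  subst hn hc
  set f := algebraMap F (AlgebraicClosure F)
  have hxq := FiniteField.pow_card_eq_of_pow_add_one_sub_pow_eq hodd hx
  obtain ⟨v, hv, hvs⟩ := exists_eq_one_or_eq_neg_one_mul_eq_of_sq_eq (a := s1c) (b := s)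
    (by rw [hs1c]; ring)
  have hsc0 : f sc ≠ 0 := (map_ne_zero f).2 (by rintro rfl; exact hc0 (by rw [← hsc]; ring))
  have hfvs : f v * f s1c = f s := by rw [← map_mul, hvs]
  refine ⟨v, hv, ?_⟩
  simp only [map_sub, map_one, map_pow, map_mul]
  field_simp
  linear_combination hxq + 2 * (f s * x - x ^ ((Fintype.card F + 1) / 2)) * hfvs
end

section
/- Let q ≡ ±1 (mod 12) be an odd prime power, n=(q+1)/2, and s ∈ {1/2, -1/2} ⊂ F_q. Then every monic irreducible factor of g_s(y)=y^n+(1-y)^n-s over F_q has the form y^3 - (3/2)y^2 + (9/16)y - m for some m ∈ F_q. -/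
/-!
A root `α` of `g_s` satisfies `α ^ q = 3/4 - α + 2 s α ^ n`: expand `α ^ (q + 1) = (α ^ n) ^ 2`
and `(1 - α) ^ (q + 1) = ((1 - α) ^ n) ^ 2` using `α ^ n + (1 - α) ^ n = s`. Hence `α` and `α ^ q`
have the same value under `y ↦ y (4y - 3) ^ 2`, which is therefore an element of `F`, and `α` is a
root of a cubic `y ^ 3 - (3/2) y ^ 2 + (9/16) y - m`. The minimal polynomial of `α` divides it, so
it remains to show that `α` does not lie in `𝔽_{q²}`.

If it did, then `α ^ n` and `(1 - α) ^ n` would be fixed by Frobenius, so `α = ξ ²`, `1 - α = η ²`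
with `ξ, η ∈ 𝔽_{q²}` and `ξ ^ (q + 1) = α ^ n`, `η ^ (q + 1) = (1 - α) ^ n`. For `i ² = -1` the
elements `w = (ξ ^ q + i η ^ q)(ξ - i η)` and `w'` (the same with `-i`) satisfy `w + w' = 2s` and
`w w' = 1`, so they are distinct primitive third or sixth roots of unity. Frobenius swaps `w` and
`w'` exactly when `i ^ q = i`, i.e. `q ≡ 1 (mod 4)`, while `w ^ q = w` exactly when `q ≡ 1 (mod 6)`;
for `q ≡ ±1 (mod 12)` these two computations of `w ^ q` contradict each other.
-/

open Polynomial

theorem natCast_ne_zero_of_coprime {R : Type*} [Ring R] [Nontrivial R] {k q : ℕ}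
    (hq : (q : R) = 0) (hk : k.Coprime q) : (k : R) ≠ 0 := by
  intro h
  have hdvd : ringChar R ∣ Nat.gcd k q := Nat.dvd_gcd (ringChar.dvd h) (ringChar.dvd hq)
  rw [hk, Nat.dvd_one] at hdvd
  exact CharP.ringChar_ne_one hdvd

section CommRing

variable {R : Type*} [CommRing R]

theorem pow_eq_of_pow_add_one_sub_pow_eq_s15 {q n : ℕ} {α s : R} (h2n : 2 * n = q + 1)
    (hq : (1 - α) ^ q = 1 - α ^ q) (hα : α ^ n + (1 - α) ^ n = s) :
    α ^ q = 1 - s ^ 2 - α + 2 * s * α ^ n := by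
  have hA : (α ^ n) ^ 2 = α ^ q * α := by rw [← pow_mul, mul_comm, h2n, pow_succ]
  have hB : ((1 - α) ^ n) ^ 2 = (1 - α) ^ q * (1 - α) := by
    rw [← pow_mul, mul_comm, h2n, pow_succ]
  linear_combination (α ^ n - (1 - α) ^ n - s) * hα + hB - hA + (1 - α) * hq

theorem mul_four_mul_sub_three_sq_eq {α β A s : R} (hs : (2 * s) ^ 2 = 1)
    (hsum : 4 * (α + β) = 3 + 8 * s * A) (hprod : α * β = A ^ 2) :
    β * (4 * β - 3) ^ 2 = α * (4 * α - 3) ^ 2 := by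
  linear_combination (β - α) * (4 * (α + β) - 3 + 8 * s * A) * hsum
    + 16 * (β - α) * A ^ 2 * hs - 16 * (β - α) * hprod

theorem pow_six_eq_one_and_pow_five_eq_of_mul_eq_one {s w w' : R} (hs : (2 * s) ^ 2 = 1)
    (hsum : w + w' = 2 * s) (hprod : w * w' = 1) : w ^ 6 = 1 ∧ w ^ 5 = w' := by
  have hquad : w ^ 2 = 2 * s * w - 1 := by linear_combination w * hsum - hprod
  have hw3 : w ^ 3 = -(2 * s) := by linear_combination (w + 2 * s) * hquad + w * hs
  constructor
  · linear_combination (w ^ 3 - 2 * s) * hw3 + hs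
  · linear_combination w ^ 2 * hw3 - 2 * s * hquad - w * hs - hsum

theorem ne_of_add_eq_of_mul_eq_one {s w w' : R} (h3 : (3 : R) ≠ 0) (hs : (2 * s) ^ 2 = 1)
    (hsum : w + w' = 2 * s) (hprod : w * w' = 1) : w ≠ w' := by
  rintro rfl
  exact h3 (by linear_combination (2 * w + 2 * s) * hsum - 4 * hprod + hs)

def twist (q : ℕ) (i ξ η : R) : R := (ξ ^ q + i * η ^ q) * (ξ - i * η)

variable (q : ℕ) {i ξ η : R}

theorem twist_mul_twist_neg (hi : i ^ 2 = -1) (h : ξ ^ 2 + η ^ 2 = 1)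
    (hq : (ξ ^ q) ^ 2 + (η ^ q) ^ 2 = 1) : twist q i ξ η * twist q (-i) ξ η = 1 := by
  unfold twist
  linear_combination ((ξ ^ q) ^ 2 + (η ^ q) ^ 2) * h + hq
    - ((ξ ^ q) ^ 2 * η ^ 2 + (η ^ q) ^ 2 * ξ ^ 2 - (η ^ q) ^ 2 * η ^ 2 * (i ^ 2 - 1)) * hi

theorem twist_add_twist_neg (hi : i ^ 2 = -1) :
    twist q i ξ η + twist q (-i) ξ η = 2 * (ξ ^ (q + 1) + η ^ (q + 1)) := by
  unfold twist
  linear_combination (-2 * η ^ q * η) * hi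

end CommRing

theorem pow_pow_eq_self_of_pow_succ_pow_eq {L : Type*} [Field L] {q : ℕ} {x : L}
    (h : (x ^ (q + 1)) ^ q = x ^ (q + 1)) : (x ^ q) ^ q = x := by
  rcases eq_or_ne (x ^ q) 0 with hx | hx
  · have hq : q ≠ 0 := by rintro rfl; simp at hx
    rw [hx, zero_pow hq, (pow_eq_zero_iff hq).mp hx]
  · refine mul_right_cancel₀ hx ?_
    rw [← mul_pow, ← pow_succ, h, pow_succ']

theorem exists_sq_eq_and_pow_pow_eq {L : Type*} [Field L] [IsAlgClosed L] {q n : ℕ}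
    {x : L} (h2n : 2 * n = q + 1) (hx : (x ^ n) ^ q = x ^ n) :
    ∃ ξ : L, ξ ^ 2 = x ∧ ξ ^ (q + 1) = x ^ n ∧ (ξ ^ q) ^ q = ξ := by
  obtain ⟨ξ, hξ⟩ := IsAlgClosed.exists_pow_nat_eq x two_pos
  have hξn : ξ ^ (q + 1) = x ^ n := by rw [← h2n, pow_mul, hξ]
  exact ⟨ξ, hξ, hξn, pow_pow_eq_self_of_pow_succ_pow_eq (by rw [hξn, hx])⟩

namespace FiniteField

open scoped IntermediateField

variable {F L : Type*} [Field F] [Fintype F] [Field L] [Algebra F L]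

local notation "q" => Fintype.card F

variable (F) in
theorem add_pow_card (x y : L) : (x + y) ^ q = x ^ q + y ^ q :=
  map_add (frobeniusAlgHom F L) x y

variable (F) in
theorem sub_pow_card (x y : L) : (x - y) ^ q = x ^ q - y ^ q :=
  map_sub (frobeniusAlgHom F L) x y

theorem algebraMap_pow_card (a : F) : algebraMap F L a ^ q = algebraMap F L a :=
  (frobeniusAlgHom F L).commutes a

theorem exists_algebraMap_eq_of_pow_card_eq {x : L} (hx : x ^ q = x) :
    ∃ a : F, algebraMap F L a = x := by
  have hq : 1 < q := Fintype.one_lt_card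
  have hmonic : (X ^ q - X : F[X]).Monic :=
    monic_X_pow_sub (by rw [degree_X]; exact_mod_cast hq)
  have hprod := prod_multiset_X_sub_C_of_monic_of_roots_card_eq hmonic
    (by rw [roots_X_pow_card_sub_X, X_pow_card_sub_X_natDegree_eq F hq]; rfl)
  have hzero := congrArg (aeval x) hprod
  rw [map_multiset_prod, Multiset.map_map] at hzero
  simp only [Function.comp_def, map_sub, aeval_X, aeval_C, map_pow, hx, sub_self] at hzero
  obtain ⟨a, -, ha⟩ := Multiset.mem_map.mp (Multiset.prod_eq_zero_iff.mp hzero)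
  exact ⟨a, (sub_eq_zero.mp ha).symm⟩

theorem pow_card_pow_card_eq_self_of_natDegree_minpoly_dvd_two {α : L} (hα : IsIntegral F α)
    (hd : (minpoly F α).natDegree ∣ 2) : (α ^ q) ^ q = α := by
  have : FiniteDimensional F F⟮α⟯ := IntermediateField.adjoin.finiteDimensional hα
  have : Finite F⟮α⟯ := Module.finite_of_finite F
  have hsq : frobeniusAlgHom F F⟮α⟯ ^ 2 = 1 := by
    rw [← orderOf_dvd_iff_pow_eq_one, orderOf_frobeniusAlgHom,
      IntermediateField.adjoin.finrank hα]
    exact hd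
  have := congrArg Subtype.val (AlgHom.congr_fun hsq (IntermediateField.AdjoinSimple.gen F α))
  simpa [pow_two] using this

theorem twist_pow_card {i ξ η : L} (hξ : (ξ ^ q) ^ q = ξ) (hη : (η ^ q) ^ q = η) :
    twist q i ξ η ^ q = twist q (-(i ^ q)) ξ η := by
  simp only [twist, mul_pow, add_pow_card F, sub_pow_card F, hξ, hη]
  ring

variable {n : ℕ} {α s : L}

theorem mul_four_mul_sub_three_sq_pow_card (h2n : 2 * n = q + 1) (hs : (2 * s) ^ 2 = 1)
    (hα : α ^ n + (1 - α) ^ n = s) : (α * (4 * α - 3) ^ 2) ^ q = α * (4 * α - 3) ^ 2 := by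
  have hfrob := pow_eq_of_pow_add_one_sub_pow_eq_s15 h2n (by rw [sub_pow_card F, one_pow]) hα
  have h4 : (4 : L) ^ q = 4 := map_ofNat (frobeniusAlgHom F L) 4
  have h3 : (3 : L) ^ q = 3 := map_ofNat (frobeniusAlgHom F L) 3
  rw [mul_pow, pow_right_comm, sub_pow_card F, mul_pow, h4, h3]
  refine mul_four_mul_sub_three_sq_eq hs (A := α ^ n) ?_ ?_
  · linear_combination 4 * hfrob - hs
  · rw [← pow_succ', ← h2n, pow_mul']

theorem exists_aeval_cubic_eq_zero (h2n : 2 * n = q + 1) (hs : (2 * s) ^ 2 = 1)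
    (hα : α ^ n + (1 - α) ^ n = s) :
    ∃ m : F, aeval α (X ^ 3 - C (3 / 2) * X ^ 2 + C (9 / 16) * X - C m) = 0 := by
  obtain ⟨m, hm⟩ := exists_algebraMap_eq_of_pow_card_eq
    (mul_four_mul_sub_three_sq_pow_card h2n hs hα)
  have h2 : (2 : L) ≠ 0 := by rintro h; simp [h] at hs
  have h16 : (16 : L) ≠ 0 := by simpa [show (16 : L) = 2 ^ 4 by norm_num] using h2
  refine ⟨m / 16, ?_⟩
  simp only [map_sub, map_add, map_mul, map_pow, aeval_X, aeval_C, map_div₀, map_ofNat, hm]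
  field_simp
  ring

theorem pow_pow_card_eq_of_pow_card_pow_card_eq (h2n : 2 * n = q + 1) (hs : (2 * s) ^ 2 = 1)
    (hsq : s ^ q = s) (hα : α ^ n + (1 - α) ^ n = s) (hα2 : (α ^ q) ^ q = α) :
    (α ^ n) ^ q = α ^ n := by
  have hfrob := pow_eq_of_pow_add_one_sub_pow_eq_s15 h2n (by rw [sub_pow_card F, one_pow]) hα
  have hfrob2 := congrArg (frobeniusAlgHom F L) hfrob
  simp only [map_add, map_sub, map_mul, map_pow, map_one, map_ofNat,
    coe_frobeniusAlgHom] at hfrob2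
  rw [hα2, hsq, pow_right_comm] at hfrob2
  have h2s : 2 * s ≠ 0 := by rintro h; simp [h] at hs
  refine mul_left_cancel₀ h2s ?_
  linear_combination hfrob - hfrob2

theorem pow_card_pow_card_ne_self [IsAlgClosed L] (hq : q % 12 = 1 ∨ q % 12 = 11)
    (h2n : 2 * n = q + 1) (hs : (2 * s) ^ 2 = 1) (hsq : s ^ q = s)
    (hα : α ^ n + (1 - α) ^ n = s) : (α ^ q) ^ q ≠ α := by
  intro hα2
  have h3 : (3 : L) ≠ 0 := by
    exact_mod_cast natCast_ne_zero_of_coprime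
      (by rw [← map_natCast (algebraMap F L), cast_card_eq_zero, map_zero])
      ((Nat.Prime.coprime_iff_not_dvd Nat.prime_three).mpr (by omega))
  have hA := pow_pow_card_eq_of_pow_card_pow_card_eq h2n hs hsq hα hα2
  have hB : ((1 - α) ^ n) ^ q = (1 - α) ^ n := by
    rw [eq_sub_of_add_eq' hα, sub_pow_card F, hsq, hA]
  obtain ⟨ξ, hξ, hξn, hξq⟩ := exists_sq_eq_and_pow_pow_eq h2n hA
  obtain ⟨η, hη, hηn, hηq⟩ := exists_sq_eq_and_pow_pow_eq h2n hB
  obtain ⟨i, hi⟩ := IsAlgClosed.exists_pow_nat_eq (-1 : L) two_pos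
  have hsum : twist q i ξ η + twist q (-i) ξ η = 2 * s := by
    rw [twist_add_twist_neg q hi, hξn, hηn, hα]
  have hprod : twist q i ξ η * twist q (-i) ξ η = 1 := by
    refine twist_mul_twist_neg q hi (by rw [hξ, hη]; ring) ?_
    rw [pow_right_comm ξ, pow_right_comm η, hξ, hη, sub_pow_card F, one_pow]
    ring
  have hne := ne_of_add_eq_of_mul_eq_one h3 hs hsum hprod
  obtain ⟨hw6, hw5⟩ := pow_six_eq_one_and_pow_five_eq_of_mul_eq_one hs hsum hprod
  have hi4 : i ^ 4 = 1 := by rw [pow_mul i 2 2, hi]; norm_num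
  have hfrob := twist_pow_card (i := i) hξq hηq
  rw [pow_eq_pow_mod q hw6, pow_eq_pow_mod q hi4] at hfrob
  rcases hq with hq | hq
  · rw [show q % 6 = 1 by omega, show q % 4 = 1 by omega, pow_one, pow_one] at hfrob
    exact hne hfrob
  · rw [show q % 6 = 5 by omega, show q % 4 = 3 by omega, hw5, pow_succ, hi] at hfrob
    exact hne (by simpa using hfrob.symm)

theorem exists_minpoly_eq_cubic [IsAlgClosed L] (hq : q % 12 = 1 ∨ q % 12 = 11) {t : F}
    (hint : IsIntegral F α) (h2n : 2 * n = q + 1) (hs : (2 * t) ^ 2 = 1)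
    (hα : α ^ n + (1 - α) ^ n = algebraMap F L t) :
    ∃ m : F, minpoly F α = X ^ 3 - C (3 / 2) * X ^ 2 + C (9 / 16) * X - C m := by
  have hsL : (2 * algebraMap F L t) ^ 2 = 1 := by
    rw [← map_ofNat (algebraMap F L) 2, ← map_mul, ← map_pow, hs, map_one]
  obtain ⟨m, hm⟩ := exists_aeval_cubic_eq_zero h2n hsL hα
  have hdeg : (X ^ 3 - C (3 / 2) * X ^ 2 + C (9 / 16) * X - C m : F[X]).natDegree = 3 := by
    compute_degree!
  refine ⟨m, (eq_of_monic_of_dvd_of_natDegree_le (minpoly.monic hint) (by monicity!)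
    (minpoly.dvd F α hm) ?_).symm⟩
  rw [hdeg]
  by_contra hlt
  have hd : (minpoly F α).natDegree ∣ 2 := by
    have := minpoly.natDegree_pos hint
    interval_cases (minpoly F α).natDegree <;> norm_num
  exact pow_card_pow_card_ne_self hq h2n hsL (algebraMap_pow_card t) hα
    (pow_card_pow_card_eq_self_of_natDegree_minpoly_dvd_two hint hd)

end FiniteField

theorem stmt15_general (F : Type*) [Field F] [Fintype F]
    (hq : Fintype.card F % 12 = 1 ∨ Fintype.card F % 12 = 11)
    (n : ℕ) (hn : n = (Fintype.card F + 1) / 2)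
    (s : F) (hs : s = 1 / 2 ∨ s = -(1 / 2)) :
    ∀ h : F[X], h.Monic → Irreducible h → h ∣ (X ^ n + (1 - X) ^ n - C s) →
      ∃ m : F, h = X ^ 3 - C (3 / 2) * X ^ 2 + C (9 / 16) * X - C m := by
  intro h hmon hirr hdvd
  have h2n : 2 * n = Fintype.card F + 1 := by omega
  have h2 : (2 : F) ≠ 0 := by
    exact_mod_cast natCast_ne_zero_of_coprime (FiniteField.cast_card_eq_zero F)
      ((Nat.Prime.coprime_iff_not_dvd Nat.prime_two).mpr (by omega))
  have hs2 : (2 * s) ^ 2 = 1 := by rcases hs with rfl | rfl <;> field_simp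
  obtain ⟨α, hα⟩ := IsAlgClosed.exists_aeval_eq_zero (AlgebraicClosure F) h
    (degree_pos_of_irreducible hirr).ne'
  have hroot : α ^ n + (1 - α) ^ n = algebraMap F _ s := by
    simpa [sub_eq_zero] using aeval_eq_zero_of_dvd_aeval_eq_zero hdvd hα
  rw [minpoly.eq_of_irreducible_of_monic hirr hα hmon]
  exact FiniteField.exists_minpoly_eq_cubic hq (Algebra.IsIntegral.isIntegral α) h2n hs2 hroot

theorem stmt15 (F : Type*) [Field F] [Fintype F] (hodd : Odd (Fintype.card F))
    (hq : Fintype.card F % 12 = 1 ∨ Fintype.card F % 12 = 11)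
    (n : ℕ) (hn : n = (Fintype.card F + 1) / 2)
    (s : F) (hs : s = 1 / 2 ∨ s = -(1 / 2)) :
    ∀ h : F[X], h.Monic → Irreducible h → h ∣ (X ^ n + (1 - X) ^ n - C s) →
      ∃ m : F, h = X ^ 3 - C (3 / 2) * X ^ 2 + C (9 / 16) * X - C m :=
  stmt15_general F hq n hn s hs
end

section
/- Let q ≡ ±1 (mod 8) be an odd prime power, n=(q+1)/2, and s ∈ F_q with s^2 = 1/2. Then every monic irreducible factor of g_s(y)=y^n+(1-y)^n-s over F_q has the form y^4 - 2y^3 + (5/4)y^2 - (1/4)y - m for some m ∈ F_q. -/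
open Polynomial

section Klemmas

variable {K : Type*} [Field K]

/-- A `ψ`-fixed nonzero element has `x ^ (2*e) = 1` where `q = 2*e+1`. -/
lemma fix_pow {q e : ℕ} (hq : q = 2*e+1) {ψ : K →+* K} (hψ : ∀ x : K, ψ x = x ^ q)
    {x : K} (hx : ψ x = x) (hx0 : x ≠ 0) : x ^ (2*e) = 1 := by
  have h1 : x ^ (2*e) * x = 1 * x := by
    rw [← pow_succ, one_mul]
    have h2 : 2*e+1 = q := hq.symm
    rw [h2, ← hψ x, hx]
  exact mul_right_cancel₀ hx0 h1

lemma neg_fix_pow {q e : ℕ} (hq : q = 2*e+1) {ψ : K →+* K} (hψ : ∀ x : K, ψ x = x ^ q)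
    {x : K} (hx : ψ x = -x) (hx0 : x ≠ 0) : x ^ (2*e) = -1 := by
  have h1 : x ^ (2*e) * x = (-1) * x := by
    rw [← pow_succ]
    have h2 : 2*e+1 = q := hq.symm
    rw [h2, ← hψ x, hx]; ring
  exact mul_right_cancel₀ hx0 h1

lemma sigma_ne_zero {σ : K} (hs2 : 2*σ^2 = 1) : σ ≠ 0 := by
  intro h; rw [h] at hs2; norm_num at hs2

lemma alpha_ne_zero {e n : ℕ} {σ α : K} (hn : n = e+1) (hs2 : 2*σ^2 = 1)
    (hroot : α^n + (1-α)^n = σ) : α ≠ 0 := by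
  intro hh
  rw [hh] at hroot
  have hn0 : n ≠ 0 := by omega
  rw [zero_pow hn0, sub_zero, one_pow, zero_add] at hroot
  rw [← hroot] at hs2
  exact one_ne_zero (α := K) (by linear_combination hs2)

lemma alpha_ne_one {e n : ℕ} {σ α : K} (hn : n = e+1) (hs2 : 2*σ^2 = 1)
    (hroot : α^n + (1-α)^n = σ) : α ≠ 1 := by
  intro hh
  rw [hh] at hroot
  have hn0 : n ≠ 0 := by omega
  rw [sub_self, zero_pow hn0, one_pow, add_zero] at hroot
  rw [← hroot] at hs2
  exact one_ne_zero (α := K) (by linear_combination hs2)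

lemma four_sigma_ne_zero {σ : K} (hs2 : 2*σ^2 = 1) (h2 : (2:K) ≠ 0) :
    (4:K)*σ ≠ 0 := by
  apply mul_ne_zero _ (sigma_ne_zero hs2)
  intro hh
  apply h2
  have h22 : (2:K)*2 = 4 := by norm_num
  rcases mul_eq_zero.mp (h22.trans hh) with h' | h' <;> exact h'

/-- The Frobenius formula: `2 ψ α = 1 + 4 σ α^n - 2 α`. -/
lemma frob_eq {q e n : ℕ} (hq : q = 2*e+1) (hn : n = e+1) {ψ : K →+* K}
    (hψ : ∀ x : K, ψ x = x ^ q) {σ α : K} (hs2 : 2*σ^2 = 1)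
    (hroot : α^n + (1-α)^n = σ) : 2 * ψ α = 1 + 4*σ*α^n - 2*α := by
  have h2n : n*2 = q+1 := by omega
  have hu2 : (α^n)^2 = ψ α * α := by
    rw [← pow_mul, h2n, pow_succ, hψ]
  have hv2 : ((1-α)^n)^2 = (1 - ψ α) * (1-α) := by
    have hm : ψ ((1:K)-α) = 1 - ψ α := by rw [map_sub, map_one]
    rw [← pow_mul, h2n, pow_succ, ← hψ, hm]
  have hv : (1-α)^n = σ - α^n := by linear_combination hroot
  rw [hv] at hv2
  linear_combination 2*hv2 - 2*hu2 - hs2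

/-- No root of `f` is fixed by Frobenius. -/
lemma lemA {q e n : ℕ} (hq : q = 2*e+1) (hn : n = e+1) {ψ : K →+* K}
    (hψ : ∀ x : K, ψ x = x ^ q) {σ α : K} (hσ : ψ σ = σ) (hs2 : 2*σ^2 = 1)
    (h2 : (2:K) ≠ 0) (hroot : α^n + (1-α)^n = σ) (hfix : ψ α = α) : False := by
  have hα0 : α ≠ 0 := alpha_ne_zero hn hs2 hroot
  have hα1 : α ≠ 1 := alpha_ne_one hn hs2 hroot
  have h1α0 : (1:K) - α ≠ 0 := sub_ne_zero.mpr (fun hh => hα1 hh.symm)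
  have hε1 : (α^e)^2 = 1 := by
    rw [← pow_mul, mul_comm e 2]
    exact fix_pow hq hψ hfix hα0
  have hψ1α : ψ ((1:K)-α) = 1-α := by rw [map_sub, map_one, hfix]
  have hε2 : (((1:K)-α)^e)^2 = 1 := by
    rw [← pow_mul, mul_comm e 2]
    exact fix_pow hq hψ hψ1α h1α0
  have hu : α^n = α^e * α := by rw [hn, pow_succ]
  have hv : (1-α)^n = (1-α)^e * (1-α) := by rw [hn, pow_succ]
  rw [hu, hv] at hroot
  have hcases : (α^e - (1-α)^e) * (α^e + (1-α)^e) = 0 := by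
    linear_combination hε1 - hε2
  rcases mul_eq_zero.mp hcases with hc | hc
  · have hee : α^e = (1-α)^e := sub_eq_zero.mp hc
    rw [hee] at hroot
    have hσε : σ = (1-α)^e := by linear_combination -hroot
    rw [hσε] at hs2
    exact one_ne_zero (α := K) (by linear_combination hs2 - 2*hε2)
  · have hee : α^e = -((1-α)^e) := eq_neg_of_add_eq_zero_left hc
    rw [hee] at hroot
    have hσε : σ = (1-α)^e * (1 - 2*α) := by linear_combination -hroot
    have hs2' := hs2
    rw [hσε] at hs2'
    have h8 : 8 * (α*(1-α)) = 1 := by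
      linear_combination -hs2' + 2*(1-2*α)^2*hε2
    have h4σ0 : (4:K)*σ ≠ 0 := four_sigma_ne_zero hs2 h2
    obtain ⟨r, hrr⟩ : ∃ r : K, 4*σ*r = 1 := ⟨(4*σ)⁻¹, mul_inv_cancel₀ h4σ0⟩
    have hr0 : r ≠ 0 := by
      intro hh; rw [hh, mul_zero] at hrr; exact one_ne_zero hrr.symm
    have hψr : ψ r = r := by
      have h1 := congrArg ψ hrr
      rw [map_mul, map_mul, map_ofNat, hσ, map_one] at h1
      exact mul_left_cancel₀ h4σ0 (h1.trans hrr.symm)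
    have hr1 : r ^ (2*e) = 1 := fix_pow hq hψ hψr hr0
    have hr2' : (8:K)*r^2 = 8*(α * (1-α)) := by
      linear_combination (4*σ*r+1)*hrr - 8*r^2*hs2 - h8
    have h80 : (8:K) ≠ 0 := by
      intro hh
      apply h2
      have h222 : (2:K)*(2*2) = 8 := by norm_num
      rcases mul_eq_zero.mp (h222.trans hh) with h' | h'
      · exact h'
      · rcases mul_eq_zero.mp h' with h'' | h'' <;> exact h''
    have hr2 : r^2 = α * (1-α) := mul_left_cancel₀ h80 hr2'
    have h1 : α^e * (1-α)^e = 1 := by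
      calc α^e * (1-α)^e = (α*(1-α))^e := by rw [mul_pow]
        _ = (r^2)^e := by rw [hr2]
        _ = r^(2*e) := by rw [← pow_mul]
        _ = 1 := hr1
    have hm1 : α^e * (1-α)^e = -1 := by
      rw [hee]; linear_combination -hε2
    rw [h1] at hm1
    exact h2 (by linear_combination hm1)

/-- If `8(α² - α) = -1` then Frobenius fixes `α`, contradiction. -/
lemma lemT {q e n : ℕ} (hq : q = 2*e+1) (hn : n = e+1) {ψ : K →+* K}
    (hψ : ∀ x : K, ψ x = x ^ q) {σ α : K} (hσ : ψ σ = σ) (hs2 : 2*σ^2 = 1)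
    (h2 : (2:K) ≠ 0) (hroot : α^n + (1-α)^n = σ) (h8t : 8*(α^2-α) = -1) : False := by
  have h4σ0 : (4:K)*σ ≠ 0 := four_sigma_ne_zero hs2 h2
  have h40 : (4:K) ≠ 0 := by
    intro hh
    apply h2
    have h22 : (2:K)*2 = 4 := by norm_num
    rcases mul_eq_zero.mp (h22.trans hh) with h' | h' <;> exact h'
  obtain ⟨r, hrr⟩ : ∃ r : K, 4*σ*r = 1 := ⟨(4*σ)⁻¹, mul_inv_cancel₀ h4σ0⟩
  have hψr : ψ r = r := by
    have h1 := congrArg ψ hrr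
    rw [map_mul, map_mul, map_ofNat, hσ, map_one] at h1
    exact mul_left_cancel₀ h4σ0 (h1.trans hrr.symm)
  have hd : ((4*α - 2) - 4*r) * ((4*α - 2) + 4*r) = 0 := by
    linear_combination 2*h8t - 2*(4*σ*r+1)*hrr + 16*r^2*hs2
  rcases mul_eq_zero.mp hd with hc | hc
  · have h4α : 4*α = 2 + 4*r := by linear_combination hc
    have h1 := congrArg ψ h4α
    rw [map_mul, map_ofNat, map_add, map_mul, map_ofNat, map_ofNat, hψr] at h1
    have hψα : ψ α = α := mul_left_cancel₀ h40 (h1.trans h4α.symm)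
    exact lemA hq hn hψ hσ hs2 h2 hroot hψα
  · have h4α : 4*α = 2 - 4*r := by linear_combination hc
    have h1 := congrArg ψ h4α
    rw [map_mul, map_ofNat, map_sub, map_mul, map_ofNat, map_ofNat, hψr] at h1
    have hψα : ψ α = α := mul_left_cancel₀ h40 (h1.trans h4α.symm)
    exact lemA hq hn hψ hσ hs2 h2 hroot hψα

/-- Frobenius acts on `t = α² - α` by `4t ↦ -4t - 1`. -/
lemma t_frob {q e n : ℕ} (hq : q = 2*e+1) (hn : n = e+1) {ψ : K →+* K}
    (hψ : ∀ x : K, ψ x = x ^ q) {σ α : K} (hs2 : 2*σ^2 = 1)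
    (hroot : α^n + (1-α)^n = σ) : 4 * ψ (α^2 - α) = -4*(α^2-α) - 1 := by
  have hfrob := frob_eq hq hn hψ hs2 hroot
  have h2n : n*2 = q+1 := by omega
  have hu2 : (α^n)^2 = ψ α * α := by
    rw [← pow_mul, h2n, pow_succ, hψ]
  rw [map_sub, map_pow]
  linear_combination (2*ψ α + (1+4*σ*α^n-2*α) - 2 + 4*α) * hfrob
    + 8*(α^n)^2*hs2 + 8*hu2

/-- The square-root construction producing `A^e = 1`. -/
lemma partA {q e n : ℕ} [Fintype K] (hq : q = 2*e+1) (hn : n = e+1) {ψ : K →+* K}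
    (hψ : ∀ x : K, ψ x = x ^ q) (hcard : Fintype.card K = q^2)
    (hchar : ringChar K ≠ 2) {β : K} (hβ0 : β ≠ 0)
    (huψ : ψ (β^n) = β^n) (hβne : ψ β ≠ β) :
    (β + ψ β + 2*β^n)^e = 1 ∧ (β + ψ β + 2*β^n) ≠ 0 := by
  have hu0 : β^n ≠ 0 := pow_ne_zero _ hβ0
  have hue : (β^n)^(2*e) = 1 := fix_pow hq hψ huψ hu0
  have hkey : Fintype.card K / 2 = n * (2*e) := by
    rw [hcard, hq, hn]
    have h1 : (2*e+1)^2 = 4*(e*e)+4*e+1 := by ring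
    have h2 : (e+1)*(2*e) = 2*(e*e)+2*e := by ring
    rw [h1, h2]
    generalize e*e = k
    omega
  have hsq : IsSquare β := by
    rw [FiniteField.isSquare_iff hchar hβ0, hkey, pow_mul, hue]
  obtain ⟨γ, hγ⟩ := hsq
  have h2n : 2*n = q+1 := by omega
  have hγψ : γ * ψ γ = β^n := by
    rw [hψ, hγ]
    calc γ * γ^q = γ^(q+1) := (pow_succ' γ q).symm
      _ = γ^(2*n) := by rw [h2n]
      _ = (γ^2)^n := by rw [pow_mul]
      _ = (γ*γ)^n := by rw [sq]
  have hψψγ : ψ (ψ γ) = γ := by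
    rw [hψ, hψ, ← pow_mul, ← pow_two, ← hcard]
    exact FiniteField.pow_card γ
  have hψβ2 : ψ γ * ψ γ = ψ β := by rw [← map_mul, ← hγ]
  have hw2 : (γ + ψ γ)^2 = β + ψ β + 2*β^n := by
    linear_combination hψβ2 + 2*hγψ - hγ
  have hwψ : ψ (γ + ψ γ) = γ + ψ γ := by rw [map_add, hψψγ]; ring
  have hu2 : (β^n)^2 = ψ β * β := by
    have hn2 : n*2 = q+1 := by omega
    rw [← pow_mul, hn2, pow_succ, hψ]
  have hAne : (β + ψ β + 2*β^n) ≠ 0 := by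
    intro hA
    have hδ : (β - ψ β)^2 = (β + ψ β + 2*β^n) * (β + ψ β - 2*β^n) := by
      linear_combination 4*hu2
    rw [hA, zero_mul] at hδ
    have hz : β - ψ β = 0 := by
      exact pow_eq_zero_iff (two_ne_zero) |>.mp hδ
    exact hβne (by linear_combination -hz)
  have hw0 : γ + ψ γ ≠ 0 := fun hh => hAne (by rw [← hw2, hh]; ring)
  refine ⟨?_, hAne⟩
  calc (β + ψ β + 2*β^n)^e = ((γ + ψ γ)^2)^e := by rw [hw2]
    _ = (γ + ψ γ)^(2*e) := by rw [← pow_mul]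
    _ = 1 := fix_pow hq hψ hwψ hw0

/-- The quadratic case is impossible. -/
lemma lemB {q e n : ℕ} [Fintype K] (hq : q = 2*e+1) (hn : n = e+1) {ψ : K →+* K}
    (hψ : ∀ x : K, ψ x = x ^ q) {σ α : K} (hσ : ψ σ = σ) (hs2 : 2*σ^2 = 1)
    (h2 : (2:K) ≠ 0) (hchar : ringChar K ≠ 2)
    (hroot : α^n + (1-α)^n = σ) (hcard : Fintype.card K = q^2) : False := by
  have hα0 : α ≠ 0 := alpha_ne_zero hn hs2 hroot
  have hα1 : α ≠ 1 := alpha_ne_one hn hs2 hroot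
  have hσ0 : σ ≠ 0 := sigma_ne_zero hs2
  have h1α0 : (1:K) - α ≠ 0 := sub_ne_zero.mpr (fun hh => hα1 hh.symm)
  have h4σ0 : (4:K)*σ ≠ 0 := four_sigma_ne_zero hs2 h2
  have h40 : (4:K) ≠ 0 := by
    intro hh
    apply h2
    have h22 : (2:K)*2 = 4 := by norm_num
    rcases mul_eq_zero.mp (h22.trans hh) with h' | h' <;> exact h'
  have hψαne : ψ α ≠ α := fun hf => lemA hq hn hψ hσ hs2 h2 hroot hf
  have hfrob : 2 * ψ α = 1 + 4*σ*α^n - 2*α := frob_eq hq hn hψ hs2 hroot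
  have hψψα : ψ (ψ α) = α := by
    rw [hψ, hψ, ← pow_mul, ← pow_two, ← hcard]
    exact FiniteField.pow_card α
  have hψu : ψ (α^n) = α^n := by
    have h1 := congrArg ψ hfrob
    simp only [map_mul, map_add, map_sub, map_one, map_ofNat, map_pow, hσ, hψψα] at h1
    have hz' : (4*σ)*(ψ α)^n = (4*σ)*(α^n) := by
      linear_combination hfrob - h1
    have h5 : (ψ α)^n = α^n := mul_left_cancel₀ h4σ0 hz'
    rw [map_pow]; exact h5
  have hv : (1-α)^n = σ - α^n := by linear_combination hroot
  have hψv : ψ ((1-α)^n) = (1-α)^n := by rw [hv, map_sub, hσ, hψu]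
  have hψ1αne : ψ ((1:K)-α) ≠ 1-α := by
    rw [map_sub, map_one]
    intro hh
    exact hψαne (by linear_combination -hh)
  obtain ⟨hAe, hAne⟩ := partA hq hn hψ hcard hchar hα0 hψu hψαne
  obtain ⟨hBe, hBne⟩ := partA hq hn hψ hcard hchar h1α0 hψv hψ1αne
  have hu2 : (α^n)^2 = ψ α * α := by
    have hn2 : n*2 = q+1 := by omega
    rw [← pow_mul, hn2, pow_succ, hψ]
  have hδψ : ψ (α - ψ α) = -(α - ψ α) := by rw [map_sub, hψψα]; ring
  have hδ0 : α - ψ α ≠ 0 := sub_ne_zero.mpr (fun hh => hψαne hh.symm)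
  have hDe : (α - ψ α)^(2*e) = -1 := neg_fix_pow hq hψ hδψ hδ0
  have hBrw : (1-α) + ψ (1-α) + 2*(1-α)^n = 2*(1+σ) - (α + ψ α + 2*α^n) := by
    rw [map_sub, map_one, hv]; ring
  have hABD4 : 4*((α + ψ α + 2*α^n) * ((1-α) + ψ (1-α) + 2*(1-α)^n))
      = 4*(2*(1+σ)^2*(α - ψ α)^2) := by
    rw [hBrw]
    linear_combination
      (1 - 6*(ψ α) - 8*σ*(ψ α) - 2*σ^2 - 4*σ^2*(ψ α) - 8*(α^n) - 12*(α^n)*σ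
        - 16*(α^n)*σ^2 - 8*(α^n)*σ^3 + 2*α + 8*α*σ - 12*α*σ^2 - 32*α*σ^3
        - 16*α*σ^4) * hfrob
      + (-16 - 32*σ - 48*σ^2 - 64*σ^3 - 32*σ^4) * hu2
      + (-1 - 8*(α^n) - 8*(α^n)*σ - 8*α - 16*α*σ - 8*α*σ^2 - 32*α*(α^n)*σ
        - 64*α*(α^n)*σ^2 - 32*α*(α^n)*σ^3 + 16*α^2 + 32*α^2*σ + 16*α^2*σ^2) * hs2
  have hABD : (α + ψ α + 2*α^n) * ((1-α) + ψ (1-α) + 2*(1-α)^n)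
      = 2*(1+σ)^2*(α - ψ α)^2 := mul_left_cancel₀ h40 hABD4
  have hσm1 : (1:K)+σ ≠ 0 := by
    intro hh
    have hσe : σ = -1 := by linear_combination hh
    rw [hσe] at hs2
    exact one_ne_zero (α := K) (by linear_combination hs2)
  have hψ1σ : ψ ((1:K)+σ) = 1+σ := by rw [map_add, map_one, hσ]
  have h1σe : ((1:K)+σ)^(2*e) = 1 := fix_pow hq hψ hψ1σ hσm1
  have h2σψ : ψ ((2:K)*σ) = 2*σ := by rw [map_mul, map_ofNat, hσ]
  have h2σ0 : (2:K)*σ ≠ 0 := mul_ne_zero h2 hσ0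
  have h2σe : ((2:K)*σ)^(2*e) = 1 := fix_pow hq hψ h2σψ h2σ0
  have h2sq : ((2:K)*σ)^2 = 2 := by linear_combination 2*hs2
  have h2e : (2:K)^e = 1 := by
    rw [← h2sq, ← pow_mul]; exact h2σe
  have hfin : (1:K) = -1 := by
    calc (1:K) = (α + ψ α + 2*α^n)^e * ((1-α) + ψ (1-α) + 2*(1-α)^n)^e := by
          rw [hAe, hBe, one_mul]
      _ = ((α + ψ α + 2*α^n) * ((1-α) + ψ (1-α) + 2*(1-α)^n))^e := by rw [mul_pow]
      _ = (2*(1+σ)^2*(α - ψ α)^2)^e := by rw [hABD]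
      _ = (2:K)^e * ((1+σ)^2)^e * ((α - ψ α)^2)^e := by rw [mul_pow, mul_pow]
      _ = (2:K)^e * ((1:K)+σ)^(2*e) * (α - ψ α)^(2*e) := by rw [← pow_mul, ← pow_mul]
      _ = -1 := by rw [h2e, h1σe, hDe, one_mul, one_mul]
  exact h2 (by linear_combination hfin)

/-- The cubic case is impossible. -/
lemma lemC {q e n : ℕ} (hq : q = 2*e+1) (hn : n = e+1) {ψ : K →+* K}
    (hψ : ∀ x : K, ψ x = x ^ q) {σ α : K} (hσ : ψ σ = σ) (hs2 : 2*σ^2 = 1)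
    (h2 : (2:K) ≠ 0) (hroot : α^n + (1-α)^n = σ)
    (hall3 : ∀ x : K, x^(q^3) = x) : False := by
  have h40 : (4:K) ≠ 0 := by
    intro hh
    apply h2
    have h22 : (2:K)*2 = 4 := by norm_num
    rcases mul_eq_zero.mp (h22.trans hh) with h' | h' <;> exact h'
  have ht : 4 * ψ (α^2 - α) = -4*(α^2-α) - 1 := t_frob hq hn hψ hs2 hroot
  set t : K := α^2 - α with htdef
  have hψψt : ψ (ψ t) = t := by
    have h1 := congrArg ψ ht
    have h1' : ψ (4 * ψ t) = 4 * ψ (ψ t) := by rw [map_mul, map_ofNat]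
    have h2' : ψ (-4*t - 1) = -4*(ψ t) - 1 := by
      rw [map_sub, map_one, map_mul, map_neg, map_ofNat]
    rw [h1', h2'] at h1
    have h4' : (4:K)*ψ (ψ t) = (4:K)*t := by linear_combination h1 - ht
    exact mul_left_cancel₀ h40 h4'
  have h3 : ψ (ψ (ψ t)) = t := by
    rw [hψ, hψ, hψ, ← pow_mul, ← pow_mul, show q*(q*q) = q^3 from by ring]
    exact hall3 _
  have h4 := congrArg ψ hψψt
  rw [h3] at h4
  have hψt : ψ t = t := h4.symm
  have h8t : 8*(α^2-α) = -1 := by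
    rw [← htdef]
    linear_combination ht - 4*hψt
  exact lemT hq hn hψ hσ hs2 h2 hroot h8t

end Klemmas

/-- Any element of an extension fixed by the `q`-power map lies in the base field. -/
lemma fixed_mem {F K : Type*} [Field F] [Fintype F] [Field K] [Algebra F K]
    {x : K} (hx : x ^ (Fintype.card F) = x) : ∃ a : F, algebraMap F K a = x := by
  classical
  set q := Fintype.card F with hqdef
  have hq1 : 1 < q := Fintype.one_lt_card
  set P : K[X] := X^q - X with hP
  have hPd : P.natDegree = q := FiniteField.X_pow_card_sub_X_natDegree_eq K hq1
  have hP0 : P ≠ 0 := FiniteField.X_pow_card_sub_X_ne_zero K hq1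
  set S : Finset K := Finset.univ.image (algebraMap F K) with hS
  set T : Finset K := P.roots.toFinset with hT
  have hsub : S ⊆ T := by
    intro y hy
    rw [hS, Finset.mem_image] at hy
    obtain ⟨a, _, ha⟩ := hy
    rw [hT, Multiset.mem_toFinset, mem_roots hP0]
    rw [hP]
    simp only [IsRoot, eval_sub, eval_pow, eval_X]
    rw [← ha, ← map_pow, FiniteField.pow_card, sub_self]
  have hScard : S.card = q := by
    rw [hS, Finset.card_image_of_injective _ (algebraMap F K).injective,
      Finset.card_univ]
  have hTcard : T.card ≤ q := by
    calc T.card ≤ Multiset.card P.roots := Multiset.toFinset_card_le _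
      _ ≤ P.natDegree := P.card_roots'
      _ = q := hPd
  have hST : S = T := Finset.eq_of_subset_of_card_le hsub (by omega)
  have hxT : x ∈ T := by
    rw [hT, Multiset.mem_toFinset, mem_roots hP0]
    rw [hP]
    simp only [IsRoot, eval_sub, eval_pow, eval_X]
    rw [hx, sub_self]
  rw [← hST, hS, Finset.mem_image] at hxT
  obtain ⟨a, _, ha⟩ := hxT
  exact ⟨a, ha⟩

theorem stmt16 (F : Type*) [Field F] [Fintype F] (hodd : Odd (Fintype.card F))
    (hq : Fintype.card F % 8 = 1 ∨ Fintype.card F % 8 = 7)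
    (n : ℕ) (hn : n = (Fintype.card F + 1) / 2)
    (s : F) (hs : s ^ 2 = 1 / 2) :
    ∀ h : F[X], h.Monic → Irreducible h → h ∣ (X ^ n + (1 - X) ^ n - C s) →
      ∃ m : F, h = X ^ 4 - 2 * X ^ 3 + C (5 / 4) * X ^ 2 - C (1 / 4) * X - C m := by
  intro h hmonic hirr hdvd
  classical
  set q := Fintype.card F with hqdef
  obtain ⟨e, he⟩ := hodd
  have heq : q = 2*e+1 := by omega
  have hne : n = e+1 := by omega
  -- characteristic
  set p := ringChar F with hpdef
  haveI hcp : CharP F p := ringChar.charP F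
  have hp : p.Prime := CharP.char_is_prime F p
  obtain ⟨k, hk⟩ := FiniteField.card F p
  have hpodd : p ≠ 2 := by
    intro hp2
    have hq2' : q = 2 ^ (k:ℕ) := by rw [← hp2]; exact hk.2
    have hdvd2 : (2:ℕ) ∣ q := by
      rw [hq2']; exact dvd_pow_self 2 k.pos.ne'
    omega
  have h2F : (2:F) ≠ 0 := by
    intro hh
    have hdvd2 : p ∣ 2 := by
      rw [← Nat.cast_ofNat (n := 2)] at hh
      exact (CharP.cast_eq_zero_iff F p 2).mp hh
    exact hpodd ((Nat.prime_dvd_prime_iff_eq hp Nat.prime_two).mp hdvd2)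
  have h4F : (4:F) ≠ 0 := by
    intro hh
    apply h2F
    have h22 : (2:F)*2 = 4 := by norm_num
    rcases mul_eq_zero.mp (h22.trans hh) with h' | h' <;> exact h'
  have h16F : (16:F) ≠ 0 := by
    intro hh
    apply h4F
    have h44 : (4:F)*4 = 16 := by norm_num
    rcases mul_eq_zero.mp (h44.trans hh) with h' | h' <;> exact h'
  -- the field K
  haveI := Fact.mk hirr
  have h0 : h ≠ 0 := hmonic.ne_zero
  let K := AdjoinRoot h
  let pb := AdjoinRoot.powerBasis h0
  haveI : Module.Finite F K := pb.finite
  haveI : Finite K := Module.finite_of_finite F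
  letI : Fintype K := Fintype.ofFinite K
  haveI hcpK : CharP K p := charP_of_injective_algebraMap (algebraMap F K).injective p
  haveI : Fact p.Prime := ⟨hp⟩
  have hcardK : Fintype.card K = q ^ h.natDegree := by
    rw [Module.card_eq_pow_finrank (K := F) (V := K)]
    congr 1
    rw [pb.finrank, AdjoinRoot.powerBasis_dim]
  have h2K : (2:K) ≠ 0 := by
    intro hh
    apply h2F
    have : algebraMap F K 2 = 0 := by rw [map_ofNat]; exact hh
    exact (_root_.map_eq_zero _).mp this
  have h4K : (4:K) ≠ 0 := by
    intro hh
    apply h2K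
    have h22 : (2:K)*2 = 4 := by norm_num
    rcases mul_eq_zero.mp (h22.trans hh) with h' | h' <;> exact h'
  have h16K : (16:K) ≠ 0 := by
    intro hh
    apply h4K
    have h44 : (4:K)*4 = 16 := by norm_num
    rcases mul_eq_zero.mp (h44.trans hh) with h' | h' <;> exact h'
  have hcharK : ringChar K ≠ 2 := by
    rw [ringChar.eq K p]
    exact hpodd
  -- Frobenius
  let ψ : K →+* K := iterateFrobenius K p (k:ℕ)
  have hψ : ∀ x : K, ψ x = x ^ q := by
    intro x
    show x ^ p ^ (k:ℕ) = x ^ q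
    rw [← hk.2]
  have hfixF : ∀ a : F, ψ (algebraMap F K a) = algebraMap F K a := by
    intro a
    rw [hψ, ← map_pow, FiniteField.pow_card]
  -- the root
  set α : K := AdjoinRoot.root h with hαdef
  have hmin : minpoly F α = h := by
    rw [hαdef, AdjoinRoot.minpoly_root h0, hmonic.leadingCoeff, inv_one, map_one, mul_one]
  have hhα : (aeval α) h = 0 := by
    have h5 := minpoly.aeval F α
    rwa [hmin] at h5
  obtain ⟨g, hg⟩ := hdvd
  have hfα : (aeval α) (X ^ n + (1 - X) ^ n - C s) = 0 := by
    rw [hg, map_mul, hhα, zero_mul]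
  set σ : K := algebraMap F K s with hσdef
  have hroot : α^n + (1-α)^n = σ := by
    simp only [map_add, map_sub, map_pow, map_one, aeval_X, aeval_C] at hfα
    linear_combination hfα
  have hσψ : ψ σ = σ := hfixF s
  have hsF : 2*s^2 = 1 := by
    rw [hs]
    rw [mul_one_div]
    exact div_self h2F
  have hs2 : 2*σ^2 = 1 := by
    have hmap := congrArg (algebraMap F K) hsF
    rw [map_mul, map_ofNat, map_pow, map_one] at hmap
    exact hmap
  -- the invariant element
  have ht : 4 * ψ (α^2 - α) = -4*(α^2-α) - 1 := t_frob heq hne hψ hs2 hroot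
  have hμmap : ψ (16*(α^2-α)^2 + 4*(α^2-α)) = 16*(ψ (α^2-α))^2 + 4*(ψ (α^2-α)) := by
    rw [map_add, map_mul, map_mul, map_pow, map_ofNat, map_ofNat]
  have hμψ : ψ (16*(α^2-α)^2 + 4*(α^2-α)) = 16*(α^2-α)^2 + 4*(α^2-α) := by
    rw [hμmap]
    linear_combination (4*ψ (α^2-α) - 4*(α^2-α))*ht
  obtain ⟨m₀, hm₀⟩ := fixed_mem (F := F) (K := K)
    (x := 16*(α^2-α)^2 + 4*(α^2-α)) (by rw [← hψ _, hμψ])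
  refine ⟨m₀/16, ?_⟩
  set m : F := m₀/16 with hmdef
  have hm16F : (16:F)*m = m₀ := by
    rw [hmdef, mul_div_assoc']
    rw [mul_comm]
    exact mul_div_cancel_right₀ m₀ h16F
  have hM : (16:K) * (algebraMap F K m) = 16*(α^2-α)^2 + 4*(α^2-α) := by
    have := congrArg (algebraMap F K) hm16F
    rw [map_mul, map_ofNat] at this
    rw [this, hm₀]
  -- aeval of the quartic
  have hF54 : (5/4 : F)*4 = 5 := div_mul_cancel₀ 5 h4F
  have e54K : (algebraMap F K (5/4))*4 = 5 := by
    have := congrArg (algebraMap F K) hF54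
    rw [map_mul, map_ofNat, map_ofNat] at this
    exact this
  have hF14 : (1/4 : F)*4 = 1 := div_mul_cancel₀ 1 h4F
  have e14K : (algebraMap F K (1/4))*4 = 1 := by
    have := congrArg (algebraMap F K) hF14
    rw [map_mul, map_ofNat, map_one] at this
    exact this
  have hQ16 : (16:K) * ((aeval α) (X ^ 4 - 2 * X ^ 3 + C (5 / 4) * X ^ 2
      - C (1 / 4) * X - C m)) = 0 := by
    simp only [map_add, map_sub, map_mul, map_pow, aeval_X, aeval_C, map_ofNat]
    linear_combination 4*α^2*e54K - 4*α*e14K - hM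
  have hQα : (aeval α) (X ^ 4 - 2 * X ^ 3 + C (5 / 4) * X ^ 2
      - C (1 / 4) * X - C m) = 0 := by
    rcases mul_eq_zero.mp hQ16 with h' | h'
    · exact absurd h' h16K
    · exact h'
  -- the quartic is monic of degree 4
  have hQmonic : (X ^ 4 - 2 * X ^ 3 + C ((5:F) / 4) * X ^ 2
      - C ((1:F) / 4) * X - C m).Monic := by
    monicity!
  have hQdeg : (X ^ 4 - 2 * X ^ 3 + C ((5:F) / 4) * X ^ 2
      - C ((1:F) / 4) * X - C m).natDegree = 4 := by
    compute_degree!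
  have hQ0 : (X ^ 4 - 2 * X ^ 3 + C ((5:F) / 4) * X ^ 2
      - C ((1:F) / 4) * X - C m) ≠ 0 := hQmonic.ne_zero
  have hdvdQ : h ∣ (X ^ 4 - 2 * X ^ 3 + C ((5:F) / 4) * X ^ 2
      - C ((1:F) / 4) * X - C m) := by
    rw [← hmin]
    exact minpoly.dvd F α hQα
  have hdle : h.natDegree ≤ 4 := by
    have h5 := Polynomial.natDegree_le_of_dvd hdvdQ hQ0
    rw [hQdeg] at h5
    exact h5
  have hd1 : 1 ≤ h.natDegree := hirr.natDegree_pos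
  have hcase : h.natDegree = 1 ∨ h.natDegree = 2 ∨ h.natDegree = 3 ∨ h.natDegree = 4 := by
    omega
  rcases hcase with hd | hd | hd | hd
  · exfalso
    have hψα : ψ α = α := by
      have hpc := FiniteField.pow_card α
      rw [hcardK, hd, pow_one] at hpc
      rw [hψ]; exact hpc
    exact lemA heq hne hψ hσψ hs2 h2K hroot hψα
  · exfalso
    have hcard2 : Fintype.card K = q^2 := by rw [hcardK, hd]
    exact lemB heq hne hψ hσψ hs2 h2K hcharK hroot hcard2
  · exfalso
    have hall3 : ∀ x : K, x^(q^3) = x := by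
      intro x
      have hpc := FiniteField.pow_card x
      rw [hcardK, hd] at hpc
      exact hpc
    exact lemC heq hne hψ hσψ hs2 h2K hroot hall3
  · obtain ⟨c, hc⟩ := hdvdQ
    have hc0 : c ≠ 0 := by
      intro hh; rw [hh, mul_zero] at hc; exact hQ0 hc
    have hcdeg : c.natDegree = 0 := by
      have hmulDeg := Polynomial.natDegree_mul h0 hc0
      rw [← hc, hQdeg, hd] at hmulDeg
      omega
    have hcm : c.Monic := hmonic.of_mul_monic_left (hc ▸ hQmonic)
    have hc1 : c = 1 := hcm.natDegree_eq_zero.mp hcdeg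
    rw [hc, hc1, mul_one]
end

section
/- Let q be an odd prime power, n=(q+1)/2, E=(q-ρ(-1))/2, and C = {a ∈ F_q : a and 1-a are both nonzero squares}. Let B ∈ F_{q^2} have multiplicative order 2E, and set C_k = -(B^k - B^{-k})^2/4. Then C_0 = 0, C_{E/2} = 1, and {C_j : 1 ≤ j ≤ E/2 - 1} = C; in particular |C| = E/2 - 1. -/
lemma aux_add_pow_q (F : Type*) [Field F] [Fintype F] (x y : AlgebraicClosure F) :
    (x + y) ^ Fintype.card F = x ^ Fintype.card F + y ^ Fintype.card F := by
  have hp : Fact (Nat.Prime (ringChar F)) := ⟨CharP.char_is_prime F _⟩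
  have : CharP (AlgebraicClosure F) (ringChar F) :=
    charP_of_injective_algebraMap (algebraMap F (AlgebraicClosure F)).injective _
  obtain ⟨n, hn, hcard⟩ := FiniteField.card F (ringChar F)
  rw [hcard]
  exact add_pow_char_pow ..

lemma aux_fix (F : Type*) [Field F] [Fintype F] (x : AlgebraicClosure F)
    (hx : x ^ Fintype.card F = x) :
    ∃ a : F, algebraMap F (AlgebraicClosure F) a = x := by
  classical
  by_contra hcon
  push_neg at hcon
  set q := Fintype.card F with hq
  set P : Polynomial (AlgebraicClosure F) := Polynomial.X ^ q - Polynomial.X with hPdef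
  have h1 : 1 < q := Fintype.one_lt_card
  have hP0 : P ≠ 0 := FiniteField.X_pow_card_sub_X_ne_zero _ h1
  have hdeg : P.natDegree = q := FiniteField.X_pow_card_sub_X_natDegree_eq _ h1
  have hroot : ∀ y : AlgebraicClosure F, y ^ q = y → y ∈ P.roots.toFinset := by
    intro y hy
    rw [Multiset.mem_toFinset, Polynomial.mem_roots hP0]
    simp [hPdef, Polynomial.IsRoot, sub_eq_zero, hy]
  have hT : (insert x (Finset.univ.image (algebraMap F (AlgebraicClosure F)))) ⊆
      P.roots.toFinset := by
    intro y hy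
    rcases Finset.mem_insert.mp hy with rfl | hy
    · exact hroot _ hx
    · obtain ⟨a, -, rfl⟩ := Finset.mem_image.mp hy
      exact hroot _ (by rw [← map_pow, FiniteField.pow_card])
  have hcard1 : (insert x (Finset.univ.image (algebraMap F (AlgebraicClosure F)))).card
      = q + 1 := by
    rw [Finset.card_insert_of_notMem (by
      simp only [Finset.mem_image, Finset.mem_univ, true_and]
      rintro ⟨a, ha⟩; exact hcon a ha)]
    rw [Finset.card_image_of_injective _ (algebraMap F (AlgebraicClosure F)).injective,
      Finset.card_univ]
  have h2 := (Finset.card_le_card hT).trans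
    ((Multiset.toFinset_card_le _).trans ((Polynomial.card_roots' P).trans hdeg.le))
  omega

theorem stmt17 (F : Type*) [Field F] [Fintype F] (hodd : Odd (Fintype.card F))
    (E : ℕ)
    (hE : (2 * E : ℤ) = (Fintype.card F : ℤ) - (if Fintype.card F % 4 = 1 then 1 else -1))
    (B : AlgebraicClosure F) (hB : orderOf B = 2 * E) :
    -(B ^ (0 : ℕ) - B⁻¹ ^ (0 : ℕ)) ^ 2 / 4 = 0 ∧
    -(B ^ (E / 2) - B⁻¹ ^ (E / 2)) ^ 2 / 4 = 1 ∧
    {x : AlgebraicClosure F | ∃ j : ℕ, 1 ≤ j ∧ j ≤ E / 2 - 1 ∧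
        x = -(B ^ j - B⁻¹ ^ j) ^ 2 / 4}
      = algebraMap F (AlgebraicClosure F) ''
          {a : F | IsSquare a ∧ a ≠ 0 ∧ IsSquare (1 - a) ∧ 1 - a ≠ 0} ∧
    Set.ncard {a : F | IsSquare a ∧ a ≠ 0 ∧ IsSquare (1 - a) ∧ 1 - a ≠ 0} = E / 2 - 1 := by
  classical
  have hq1 : 1 < Fintype.card F := Fintype.one_lt_card
  have hqodd : Fintype.card F % 2 = 1 := Nat.odd_iff.mp hodd
  set q := Fintype.card F with hqdef
  set al := algebraMap F (AlgebraicClosure F) with hal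
  have hkey : (q = 2 * E + 1 ∨ q + 1 = 2 * E) ∧ E % 2 = 0 ∧ 2 ≤ E := by
    split_ifs at hE with h
    · exact ⟨Or.inl (by omega), by omega, by omega⟩
    · have h3 : q % 4 = 3 := by omega
      exact ⟨Or.inr (by omega), by omega, by omega⟩
  obtain ⟨hcase, hEeven, hE2⟩ := hkey
  have hEpos : 0 < E := by omega
  have hB2E : B ^ (2 * E) = 1 := by rw [← hB]; exact pow_orderOf_eq_one B
  have hB0 : B ≠ 0 := by
    intro h; rw [h, zero_pow (by omega : 2 * E ≠ 0)] at hB2E; exact zero_ne_one hB2E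
  have horder : ∀ m : ℕ, B ^ m = 1 ↔ 2 * E ∣ m := fun m => by
    rw [← orderOf_dvd_iff_pow_eq_one, hB]
  have hdvd_bound : ∀ m : ℕ, 0 < m → m < 2 * E → ¬ (2 * E ∣ m) := by
    intro m h1 h2 hd
    have := Nat.le_of_dvd h1 hd
    omega
  have hBE : B ^ E = -1 := by
    have h2 : (B ^ E) ^ 2 = 1 := by rw [← pow_mul, mul_comm]; exact hB2E
    rcases sq_eq_one_iff.mp h2 with h | h
    · exact absurd ((horder E).mp h) (hdvd_bound E hEpos (by omega))
    · exact h
  set i : AlgebraicClosure F := B ^ (E / 2) with hidef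
  have hi2 : i ^ 2 = -1 := by
    rw [hidef, ← pow_mul, Nat.div_mul_cancel (by omega : 2 ∣ E)]; exact hBE
  have hi0 : i ≠ 0 := pow_ne_zero _ hB0
  have hiinv : i⁻¹ = -i := by
    have h : i * -i = 1 := by linear_combination -hi2
    exact inv_eq_of_mul_eq_one_right h
  -- characteristic facts
  have h2F : (2 : F) ≠ 0 := by
    intro h
    have hprime := CharP.char_is_prime F (ringChar F)
    have hdvd : ringChar F ∣ 2 := by
      have : ((2 : ℕ) : F) = 0 := by exact_mod_cast h
      exact (CharP.cast_eq_zero_iff F (ringChar F) 2).mp this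
    have hchar : ringChar F = 2 := by
      rcases (Nat.prime_two.eq_one_or_self_of_dvd _ hdvd) with h' | h'
      · exact absurd h' hprime.one_lt.ne'
      · exact h'
    haveI : Fact (Nat.Prime 2) := ⟨Nat.prime_two⟩
    haveI : CharP F 2 := hchar ▸ ringChar.charP F
    obtain ⟨n, -, hcard⟩ := FiniteField.card F 2
    have hdvd2 : 2 ∣ q := by
      rw [hqdef, hcard]
      exact dvd_pow_self 2 (by exact_mod_cast n.pos.ne')
    omega
  have h2K : (2 : AlgebraicClosure F) ≠ 0 := by
    intro h
    apply h2F
    apply (algebraMap F (AlgebraicClosure F)).injective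
    rw [map_ofNat, map_zero]
    exact h
  have h4K : (4 : AlgebraicClosure F) ≠ 0 := by
    intro h
    rcases mul_eq_zero.mp (show (2 : AlgebraicClosure F) * 2 = 0 by rw [← h]; norm_num)
      with h' | h' <;> exact h2K h'
  -- Frobenius facts
  have halg : ∀ a : F, (al a) ^ q = al a := by
    intro a; rw [hal, ← map_pow, FiniteField.pow_card]
  have hfrob_add : ∀ x y : AlgebraicClosure F, (x + y) ^ q = x ^ q + y ^ q :=
    aux_add_pow_q F
  have hfrob_sub : ∀ x y : AlgebraicClosure F, (x - y) ^ q = x ^ q - y ^ q := by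
    intro x y
    rw [sub_eq_add_neg, hfrob_add, hodd.neg_pow, sub_eq_add_neg]
  have h2q : (2 : AlgebraicClosure F) ^ q = 2 := by
    have := halg 2
    rwa [map_ofNat] at this
  have hcase' : (q = 2 * E + 1 ∧ B ^ q = B ∧ i ^ q = i) ∨
      (q + 1 = 2 * E ∧ B ^ q = B⁻¹ ∧ i ^ q = -i) := by
    rcases hcase with h | h
    · left
      have hBq : B ^ q = B := by rw [h, pow_succ, hB2E, one_mul]
      exact ⟨h, hBq, by rw [hidef, pow_right_comm, hBq]⟩
    · right
      have hBq : B ^ q = B⁻¹ := by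
        apply eq_inv_of_mul_eq_one_left
        rw [← pow_succ, h, hB2E]
      refine ⟨h, hBq, ?_⟩
      rw [hidef, pow_right_comm, hBq, inv_pow, ← hidef, hiinv]
  -- key reformulation
  have hf2 : ∀ j : ℕ, -(B ^ j - B⁻¹ ^ j) ^ 2 / 4
      = (2 - (B ^ (2 * j) + (B ^ (2 * j))⁻¹)) / 4 := by
    intro j
    have hbj : B ^ j ≠ 0 := pow_ne_zero _ hB0
    rw [inv_pow, mul_comm 2 j, pow_mul]
    field_simp
    ring
  -- forward inclusion
  have hsub : ∀ j : ℕ, 1 ≤ j → j ≤ E / 2 - 1 →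
      ∃ a : F, (IsSquare a ∧ a ≠ 0 ∧ IsSquare (1 - a) ∧ 1 - a ≠ 0) ∧
        al a = -(B ^ j - B⁻¹ ^ j) ^ 2 / 4 := by
    intro j hj1 hj2
    have hjE : 2 * j + 2 ≤ E := by omega
    set b : AlgebraicClosure F := B ^ j with hbdef
    have hb0 : b ≠ 0 := pow_ne_zero _ hB0
    have hbsq1 : b ^ 2 ≠ 1 := by
      intro h
      rw [hbdef, ← pow_mul] at h
      exact hdvd_bound (j * 2) (by omega) (by omega) ((horder _).mp h)
    have hbsqneg : b ^ 2 ≠ -1 := by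
      intro h
      have h4 : b ^ 4 = 1 := by
        rw [show (4 : ℕ) = 2 * 2 from rfl, pow_mul, h]; ring
      rw [hbdef, ← pow_mul] at h4
      exact hdvd_bound (j * 4) (by omega) (by omega) ((horder _).mp h4)
    have hnum1 : b - b⁻¹ ≠ 0 := by
      rw [sub_ne_zero]
      intro h
      apply hbsq1
      rw [sq]
      nth_rewrite 2 [h]
      exact mul_inv_cancel₀ hb0
    have hnum2 : b + b⁻¹ ≠ 0 := by
      intro h
      apply hbsqneg
      have hb : b = -b⁻¹ := eq_neg_of_add_eq_zero_left h
      rw [sq]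
      nth_rewrite 2 [hb]
      rw [mul_neg, mul_inv_cancel₀ hb0]
    set w : AlgebraicClosure F := (b - b⁻¹) / (2 * i) with hwdef
    set v : AlgebraicClosure F := (b + b⁻¹) / 2 with hvdef
    have hbb : b * b⁻¹ = 1 := mul_inv_cancel₀ hb0
    have hw2 : w ^ 2 = -(B ^ j - B⁻¹ ^ j) ^ 2 / 4 := by
      rw [inv_pow, ← hbdef, hwdef, div_pow, mul_pow, hi2]
      rw [div_eq_div_iff (by intro hcon; apply h4K; linear_combination -hcon) h4K]
      ring
    have hv2 : v ^ 2 = 1 - w ^ 2 := by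
      rw [hw2, inv_pow, ← hbdef, hvdef, div_pow]
      rw [show ((2 : AlgebraicClosure F)) ^ 2 = 4 by norm_num]
      rw [neg_div, sub_neg_eq_add, add_div' _ _ _ h4K, div_eq_div_iff h4K h4K]
      linear_combination 16 * hbb
    have hwq : w ^ q = w := by
      rw [hwdef, div_pow, hfrob_sub, mul_pow, h2q, inv_pow, hbdef, pow_right_comm]
      rcases hcase' with ⟨-, h1, h2⟩ | ⟨-, h1, h2⟩
      · rw [h1, h2]
      · rw [h1, h2, inv_pow, inv_inv, mul_neg, div_neg, ← neg_div, neg_sub]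
    have hvq : v ^ q = v := by
      rw [hvdef, div_pow, hfrob_add, h2q, inv_pow, hbdef, pow_right_comm]
      rcases hcase' with ⟨-, h1, -⟩ | ⟨-, h1, -⟩
      · rw [h1]
      · rw [h1, inv_pow, inv_inv, add_comm]
    obtain ⟨w0, hw0⟩ := aux_fix F w hwq
    obtain ⟨v0, hv0⟩ := aux_fix F v hvq
    have hwne : w ≠ 0 := div_ne_zero hnum1 (mul_ne_zero h2K hi0)
    have hvne : v ≠ 0 := div_ne_zero hnum2 h2K
    have hw0ne : w0 ≠ 0 := by
      intro h; apply hwne; rw [← hw0, h, map_zero]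
    have hv0ne : v0 ≠ 0 := by
      intro h; apply hvne; rw [← hv0, h, map_zero]
    have h1a : (1 : F) - w0 ^ 2 = v0 ^ 2 := by
      apply (algebraMap F (AlgebraicClosure F)).injective
      rw [map_sub, map_one, map_pow, map_pow, ← hal, hw0, hv0, hv2]
    refine ⟨w0 ^ 2, ⟨⟨w0, by ring⟩, pow_ne_zero _ hw0ne, ?_, ?_⟩, ?_⟩
    · rw [h1a]; exact ⟨v0, by ring⟩
    · rw [h1a]; exact pow_ne_zero _ hv0ne
    · rw [map_pow, hw0, hw2]
  -- reverse inclusion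
  have hsup : ∀ a : F, IsSquare a → a ≠ 0 → IsSquare (1 - a) → 1 - a ≠ 0 →
      ∃ j : ℕ, 1 ≤ j ∧ j ≤ E / 2 - 1 ∧
        al a = -(B ^ j - B⁻¹ ^ j) ^ 2 / 4 := by
    rintro a ⟨s, hs⟩ ha0 ⟨t, ht⟩ h1a0
    have hS2 : (al s) ^ 2 = al a := by
      rw [← map_pow]; exact congrArg al (by rw [sq, ← hs])
    have hT2 : (al t) ^ 2 = 1 - al a := by
      rw [← map_pow, show (1 : AlgebraicClosure F) - al a = al (1 - a) by
        rw [map_sub, map_one]]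
      exact congrArg al (by rw [sq, ← ht])
    have hTS0 : al t + al s * i ≠ 0 := by
      intro h
      have hT' : al t = -(al s * i) := eq_neg_of_add_eq_zero_left h
      have h2 : (al t) ^ 2 = -((al s) ^ 2) := by
        rw [hT', neg_sq, mul_pow, hi2, mul_neg, mul_one]
      rw [hT2, hS2] at h2
      exact one_ne_zero (show (1 : AlgebraicClosure F) = 0 by linear_combination h2)
    have hprod : (al t + al s * i) * (al t - al s * i) = 1 := by
      have : (al t + al s * i) * (al t - al s * i) = (al t) ^ 2 - (al s) ^ 2 * i ^ 2 := by
        ring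
      rw [this, hi2, hT2, hS2]
      ring
    set u : AlgebraicClosure F := (al t + al s * i) ^ 2 with hu
    have huinv : u⁻¹ = (al t - al s * i) ^ 2 := by
      apply inv_eq_of_mul_eq_one_right
      rw [hu, ← mul_pow, hprod, one_pow]
    have huE : u ^ E = 1 := by
      rcases hcase' with ⟨hc, -, hic⟩ | ⟨hc, -, hic⟩
      · have hfq : (al t + al s * i) ^ q = al t + al s * i := by
          rw [hfrob_add, mul_pow, halg t, halg s, hic]
        have hstep : u ^ E * (al t + al s * i) = 1 * (al t + al s * i) := by
          rw [hu, ← pow_mul, one_mul, ← pow_succ, ← hc, hfq]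
        exact mul_right_cancel₀ hTS0 hstep
      · have hfq : (al t + al s * i) ^ q = al t - al s * i := by
          rw [hfrob_add, mul_pow, halg t, halg s, hic]
          ring
        rw [hu, ← pow_mul, mul_comm 2 E, mul_comm E 2, ← hc, pow_succ, hfq]
        rw [mul_comm] at hprod
        exact hprod
    haveI : NeZero E := ⟨by omega⟩
    have hzeta : IsPrimitiveRoot (B ^ 2) E := by
      have hord := IsPrimitiveRoot.orderOf (B ^ 2)
      have hg : orderOf (B ^ 2) = E := by
        rw [orderOf_pow' B (by norm_num : (2 : ℕ) ≠ 0), hB]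
        rw [show Nat.gcd (2 * E) 2 = 2 from Nat.gcd_eq_right ⟨E, rfl⟩]
        exact Nat.mul_div_cancel_left E (by norm_num)
      rwa [hg] at hord
    obtain ⟨j, hjE, hju⟩ := hzeta.eq_pow_of_pow_eq_one huE
    have hBu : B ^ (2 * j) = u := by rw [pow_mul]; exact hju
    have hsum : u + u⁻¹ = 2 - 4 * al a := by
      rw [huinv, hu]
      linear_combination 2 * hT2 + 2 * i ^ 2 * hS2 + 2 * al a * hi2
    have hfj : ∀ m : ℕ, B ^ (2 * m) + (B ^ (2 * m))⁻¹ = 2 - 4 * al a →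
        al a = -(B ^ m - B⁻¹ ^ m) ^ 2 / 4 := by
      intro m hm
      rw [hf2 m, hm, eq_div_iff h4K]
      ring
    have hj0 : j ≠ 0 := by
      rintro rfl
      have hu1 : u = 1 := by rw [← hBu, mul_zero, pow_zero]
      rw [hu1, inv_one] at hsum
      have h4A : 4 * al a = 0 := by linear_combination hsum
      rcases mul_eq_zero.mp h4A with h' | h'
      · exact h4K h'
      · exact ha0 ((algebraMap F (AlgebraicClosure F)).injective (by rw [map_zero]; exact h'))
    have hjhalf : 2 * j ≠ E := by
      intro heq
      have hum : u = -1 := by rw [← hBu, heq, hBE]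
      rw [hum] at hsum
      rw [inv_neg_one] at hsum
      have h4A : 4 * al a = 4 * 1 := by linear_combination hsum
      have hA1 : al a = al 1 := by rw [map_one]; exact mul_left_cancel₀ h4K h4A
      have ha1 : a = 1 := (algebraMap F (AlgebraicClosure F)).injective hA1
      exact h1a0 (by rw [ha1, sub_self])
    rcases Nat.lt_or_ge j (E / 2) with hlt | hge
    · exact ⟨j, by omega, by omega, hfj j (by rw [hBu]; exact hsum)⟩
    · refine ⟨E - j, by omega, by omega, ?_⟩
      apply hfj
      have hinvpow : B ^ (2 * (E - j)) = u⁻¹ := by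
        apply eq_inv_of_mul_eq_one_left
        rw [← hBu, ← pow_add, show 2 * (E - j) + 2 * j = 2 * E by omega, hB2E]
      rw [hinvpow, inv_inv, add_comm]
      exact hsum
  -- injectivity
  have hinj : ∀ j k : ℕ, 1 ≤ j → j ≤ E / 2 - 1 → 1 ≤ k → k ≤ E / 2 - 1 →
      -(B ^ j - B⁻¹ ^ j) ^ 2 / 4 = -(B ^ k - B⁻¹ ^ k) ^ 2 / 4 → j = k := by
    intro j k hj1 hj2 hk1 hk2 h
    rw [hf2, hf2] at h
    have hsums : B ^ (2 * j) + (B ^ (2 * j))⁻¹ = B ^ (2 * k) + (B ^ (2 * k))⁻¹ := by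
      rw [div_eq_div_iff h4K h4K] at h
      have h' := mul_right_cancel₀ h4K h
      linear_combination -h'
    have hu0 : B ^ (2 * j) ≠ 0 := pow_ne_zero _ hB0
    have hw0 : B ^ (2 * k) ≠ 0 := pow_ne_zero _ hB0
    have hu' : B ^ (2 * j) * (B ^ (2 * j))⁻¹ = 1 := mul_inv_cancel₀ hu0
    have hw' : B ^ (2 * k) * (B ^ (2 * k))⁻¹ = 1 := mul_inv_cancel₀ hw0
    have h3 : (B ^ (2 * j) - B ^ (2 * k)) * (B ^ (2 * j) * B ^ (2 * k) - 1) = 0 := by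
      linear_combination B ^ (2 * j) * B ^ (2 * k) * hsums - B ^ (2 * k) * hu'
        + B ^ (2 * j) * hw'
    rcases mul_eq_zero.mp h3 with h4 | h4
    · have heq : B ^ (2 * j) = B ^ (2 * k) := by rwa [sub_eq_zero] at h4
      have := pow_injOn_Iio_orderOf (x := B)
        (Set.mem_Iio.mpr (by rw [hB]; omega)) (Set.mem_Iio.mpr (by rw [hB]; omega)) heq
      omega
    · have hone : B ^ (2 * j + 2 * k) = 1 := by
        rw [pow_add, ← sub_eq_zero]
        linear_combination h4
      exact absurd ((horder _).mp hone) (hdvd_bound _ (by omega) (by omega))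
  -- assemble
  have hseteq : {x : AlgebraicClosure F | ∃ j : ℕ, 1 ≤ j ∧ j ≤ E / 2 - 1 ∧
        x = -(B ^ j - B⁻¹ ^ j) ^ 2 / 4}
      = al '' {a : F | IsSquare a ∧ a ≠ 0 ∧ IsSquare (1 - a) ∧ 1 - a ≠ 0} := by
    ext x
    constructor
    · rintro ⟨j, hj1, hj2, rfl⟩
      obtain ⟨a, ha, haeq⟩ := hsub j hj1 hj2
      exact ⟨a, ha, haeq⟩
    · rintro ⟨a, ⟨hsq, ha0, hsq', h1a0⟩, rfl⟩
      obtain ⟨j, hj1, hj2, heq⟩ := hsup a hsq ha0 hsq' h1a0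
      exact ⟨j, hj1, hj2, heq⟩
  have hcardeq : Set.ncard {a : F | IsSquare a ∧ a ≠ 0 ∧ IsSquare (1 - a) ∧ 1 - a ≠ 0}
      = E / 2 - 1 := by
    have himg : al '' {a : F | IsSquare a ∧ a ≠ 0 ∧ IsSquare (1 - a) ∧ 1 - a ≠ 0}
        = (fun j : ℕ => -(B ^ j - B⁻¹ ^ j) ^ 2 / 4) '' (Set.Icc 1 (E / 2 - 1)) := by
      rw [← hseteq]
      ext x
      simp only [Set.mem_setOf_eq, Set.mem_image, Set.mem_Icc]
      constructor
      · rintro ⟨j, hj1, hj2, rfl⟩; exact ⟨j, ⟨hj1, hj2⟩, rfl⟩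
      · rintro ⟨j, ⟨hj1, hj2⟩, rfl⟩; exact ⟨j, hj1, hj2, rfl⟩
    have h1 : (al '' {a : F | IsSquare a ∧ a ≠ 0 ∧ IsSquare (1 - a) ∧ 1 - a ≠ 0}).ncard
        = Set.ncard {a : F | IsSquare a ∧ a ≠ 0 ∧ IsSquare (1 - a) ∧ 1 - a ≠ 0} :=
      Set.ncard_image_of_injective _ (RingHom.injective al)
    have h2 : ((fun j : ℕ => -(B ^ j - B⁻¹ ^ j) ^ 2 / 4) '' (Set.Icc 1 (E / 2 - 1))).ncard
        = (Set.Icc (1 : ℕ) (E / 2 - 1)).ncard :=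
      Set.ncard_image_of_injOn (fun j hj k hk hjk =>
        hinj j k hj.1 hj.2 hk.1 hk.2 hjk)
    have h3 : (Set.Icc (1 : ℕ) (E / 2 - 1)).ncard = E / 2 - 1 := by
      rw [← Finset.coe_Icc, Set.ncard_coe_finset, Nat.card_Icc]
      omega
    rw [← h1, himg, h2, h3]
  refine ⟨by norm_num, ?_, hseteq, hcardeq⟩
  rw [inv_pow, ← hidef, hiinv, show i - -i = 2 * i by ring, mul_pow, hi2,
    div_eq_one_iff_eq h4K]
  norm_num
end
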